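/- arXiv:math/0610443 — 4 statements merged into one kernel-verified Lean document; each statement's English description precedes it below -/
import Mathlib

section
/- Let f : [0,1] → [0,1] be any continuous map and define the continuous map F : [0,3] → [0,3] by F(x) = f(x) + 2 for 0 ≤ x ≤ 1, F(x) = (2 − x)(f(1) + 2) for 1 ≤ x ≤ 2, and F(x) = x − 2 for 2 ≤ x ≤ 3. Then for every δ > 0, F has no nonempty δ-scrambled set that is invariant under F. -/
open Filter Set Function

/-- `limsup_{n→∞} |fⁿ(x) − fⁿ(y)|`. -/
noncomputable def limsupD (f : ℝ → ℝ) (x y : ℝ) : ℝ :=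
  Filter.limsup (fun n : ℕ => |f^[n] x - f^[n] y|) Filter.atTop

/-- `liminf_{n→∞} |fⁿ(x) − fⁿ(y)|`. -/
noncomputable def liminfD (f : ℝ → ℝ) (x y : ℝ) : ℝ :=
  Filter.liminf (fun n : ℕ => |f^[n] x - f^[n] y|) Filter.atTop

/-- `p` is a periodic point of `f`. -/
def PerPt (f : ℝ → ℝ) (p : ℝ) : Prop := ∃ m : ℕ, 0 < m ∧ f^[m] p = p

/-- `p` is a periodic point of `f` of least period `k`. -/
def LeastPeriod (f : ℝ → ℝ) (p : ℝ) (k : ℕ) : Prop :=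
  f^[k] p = p ∧ ∀ i : ℕ, 0 < i → i < k → f^[i] p ≠ p

/-- `S ⊆ I` is a `δ`-scrambled set of the map `f : I → I`. -/
def ScrambledSet (f : ℝ → ℝ) (I : Set ℝ) (δ : ℝ) (S : Set ℝ) : Prop :=
  S ⊆ I ∧
  (∀ x ∈ S, ∀ y ∈ S, x ≠ y → δ ≤ limsupD f x y ∧ liminfD f x y = 0) ∧
  (∀ x ∈ S, ∀ p ∈ I, PerPt f p → δ / 2 ≤ limsupD f x p)

/-- The ω-limit set of `x` under `f`: the set of limit points of the orbit of `x`. -/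
def OmegaSet (f : ℝ → ℝ) (x : ℝ) : Set ℝ :=
  {y : ℝ | ∀ ε > 0, ∀ N : ℕ, ∃ n ≥ N, |f^[n] x - y| < ε}

/-- `x` is a recurrent point of `f`. -/
def RecPt (f : ℝ → ℝ) (x : ℝ) : Prop := x ∈ OmegaSet f x

/-- `f` is turbulent on `I`: there are closed nondegenerate subintervals `J₀, J₁` of `I`
with at most one common point with `f(J₀) ∩ f(J₁) ⊇ J₀ ∪ J₁`. -/
def Turbulent (f : ℝ → ℝ) (I : Set ℝ) : Prop :=
  ∃ p q r s : ℝ, p < q ∧ r < s ∧ Set.Icc p q ⊆ I ∧ Set.Icc r s ⊆ I ∧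
    (Set.Icc p q ∩ Set.Icc r s).Subsingleton ∧
    Set.Icc p q ∪ Set.Icc r s ⊆ f '' Set.Icc p q ∩ f '' Set.Icc r s

/-- `f` is strictly turbulent on `I`: the two intervals can be chosen disjoint. -/
def StrictlyTurbulent (f : ℝ → ℝ) (I : Set ℝ) : Prop :=
  ∃ p q r s : ℝ, p < q ∧ r < s ∧ Set.Icc p q ⊆ I ∧ Set.Icc r s ⊆ I ∧
    Disjoint (Set.Icc p q) (Set.Icc r s) ∧
    Set.Icc p q ∪ Set.Icc r s ⊆ f '' Set.Icc p q ∩ f '' Set.Icc r s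

/-!
On `[1, 2]` the map `F` is affine with slope `-(f 1 + 2) ≤ -2`, so it expands distances to its
fixed point `p ∈ [1, 2]` by a factor of at least two; an orbit that never leaves `[1, 2]` is
therefore the fixed point `p` itself, which cannot lie in a scrambled set. Any other orbit in
the invariant set enters `[0, 1] ∪ [2, 3]`, from where `F` alternates between `[0, 1]` and
`[2, 3]`. Such a point `y` and its image `F y` stay at distance at least one forever, against
`liminf |Fⁿ y - Fⁿ (F y)| = 0`.
-/

@[simp]
theorem limsupD_self (f : ℝ → ℝ) (x : ℝ) : limsupD f x x = 0 := by
  simp [limsupD]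

theorem ScrambledSet.not_perPt {f : ℝ → ℝ} {I S : Set ℝ} {δ x : ℝ}
    (hS : ScrambledSet f I δ S) (hδ : 0 < δ) (hx : x ∈ S) : ¬ PerPt f x := fun hper => by
  have := hS.2.2 x hx x (hS.1 hx) hper
  rw [limsupD_self] at this
  linarith

theorem le_liminfD_of_forall_le {f : ℝ → ℝ} {x y a b d : ℝ}
    (hx : ∀ n, f^[n] x ∈ Icc a b) (hy : ∀ n, f^[n] y ∈ Icc a b)
    (h : ∀ n, d ≤ |f^[n] x - f^[n] y|) : d ≤ liminfD f x y := by
  have hbdd : IsBoundedUnder (· ≤ ·) atTop fun n => |f^[n] x - f^[n] y| :=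
    isBoundedUnder_of ⟨b - a, fun n =>
      abs_sub_le_of_le_of_le (hx n).1 (hx n).2 (hy n).1 (hy n).2⟩
  exact le_liminf_of_le hbdd.isCoboundedUnder_ge (Eventually.of_forall h)

theorem ScrambledSet.not_forall_le_abs_iterate_sub_iterate_apply {f : ℝ → ℝ} {S : Set ℝ}
    {a b δ d y : ℝ} (hS : ScrambledSet f (Icc a b) δ S) (hinv : MapsTo f S S) (hd : 0 < d)
    (hy : y ∈ S) : ¬ ∀ n, d ≤ |f^[n] y - f^[n] (f y)| := fun hsep => by
  have hfy : f y ∈ S := hinv hy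
  have hne : y ≠ f y := fun h => by
    have := hsep 0
    rw [← h, iterate_zero_apply, sub_self, abs_zero] at this
    linarith
  have hlim := le_liminfD_of_forall_le (fun k => hS.1 (hinv.iterate k hy))
    (fun k => hS.1 (hinv.iterate k hfy)) hsep
  rw [(hS.2.1 y hy (f y) hfy hne).2] at hlim
  linarith

theorem eq_of_forall_iterate_mem_of_expanding {f : ℝ → ℝ} {J : Set ℝ} {p c x : ℝ}
    (hc : 1 < c) (hJ : Bornology.IsBounded J) (hexp : ∀ z ∈ J, |f z - p| = c * |z - p|)
    (horbit : ∀ n, f^[n] x ∈ J) : x = p := by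
  have hdist : ∀ n, |f^[n] x - p| = c ^ n * |x - p| := by
    intro n
    induction n with
    | zero => simp
    | succ n ih => rw [iterate_succ_apply', hexp _ (horbit n), ih, pow_succ]; ring
  by_contra hne
  obtain ⟨R, hR⟩ := hJ.subset_closedBall p
  have hgrow : Tendsto (fun n => c ^ n * |x - p|) atTop atTop :=
    (tendsto_pow_atTop_atTop_of_one_lt hc).atTop_mul_const (abs_pos.2 (sub_ne_zero.2 hne))
  obtain ⟨n, hn⟩ := (hgrow.eventually_gt_atTop R).exists
  have hle : |f^[n] x - p| ≤ R := by
    simpa only [Metric.mem_closedBall, Real.dist_eq] using hR (horbit n)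
  rw [hdist n] at hle
  linarith

theorem le_abs_iterate_sub_iterate_apply {f : ℝ → ℝ} {A B : Set ℝ} {d y : ℝ}
    (hAB : MapsTo f A B) (hBA : MapsTo f B A) (hsep : ∀ a ∈ A, ∀ b ∈ B, d ≤ |a - b|)
    (hy : y ∈ A ∪ B) (n : ℕ) : d ≤ |f^[n] y - f^[n] (f y)| := by
  have hmaps : MapsTo f (A ∪ B) (A ∪ B) := union_comm B A ▸ hAB.union_union hBA
  rw [← iterate_succ_apply, iterate_succ_apply']
  rcases hmaps.iterate n hy with h | h
  · exact hsep _ h _ (hAB h)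
  · rw [abs_sub_comm]
    exact hsep _ (hBA h) _ h

theorem exists_abs_sub_eq_mul_abs_sub_of_eq_two_sub_mul {F : ℝ → ℝ} {c : ℝ} (hc : 1 ≤ c)
    (hF : ∀ z ∈ Icc (1 : ℝ) 2, F z = (2 - z) * c) :
    ∃ p ∈ Icc (1 : ℝ) 2, ∀ z ∈ Icc (1 : ℝ) 2, |F z - p| = c * |z - p| := by
  have hc' : 0 < 1 + c := by linarith
  refine ⟨2 * c / (1 + c), ⟨?_, ?_⟩, fun z hz => ?_⟩
  · rw [le_div_iff₀ hc']; linarith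
  · rw [div_le_iff₀ hc']; linarith
  · have : F z - 2 * c / (1 + c) = -(c * (z - 2 * c / (1 + c))) := by
      rw [hF z hz]; field_simp; ring
    rw [this, abs_neg, abs_mul, abs_of_pos (by linarith)]

theorem no_invariant_scrambled_set_of_square_root_general
    (f F : ℝ → ℝ)
    (hfm : Set.MapsTo f (Set.Icc 0 1) (Set.Icc 0 1))
    (hF1 : ∀ x ∈ Set.Icc (0:ℝ) 1, F x = f x + 2)
    (hF2 : ∀ x ∈ Set.Icc (1:ℝ) 2, F x = (2 - x) * (f 1 + 2))
    (hF3 : ∀ x ∈ Set.Icc (2:ℝ) 3, F x = x - 2) :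
    ∀ δ > 0, ∀ S : Set ℝ, ScrambledSet F (Set.Icc 0 3) δ S → Set.MapsTo F S S → S = ∅ := by
  intro δ hδ S hS hinv
  refine eq_empty_iff_forall_notMem.2 fun x hx => ?_
  have hf1 : f 1 ∈ Icc (0 : ℝ) 1 := hfm ⟨zero_le_one, le_rfl⟩
  obtain ⟨p, hp, hexp⟩ :=
    exists_abs_sub_eq_mul_abs_sub_of_eq_two_sub_mul (by linarith [hf1.1]) hF2
  by_cases hstay : ∀ n, F^[n] x ∈ Icc (1 : ℝ) 2
  · have hxp : x = p := eq_of_forall_iterate_mem_of_expanding (by linarith [hf1.1])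
      (Metric.isBounded_Icc 1 2) hexp hstay
    have hfix : F p = p := by simpa [sub_eq_zero] using hexp p hp
    exact hS.not_perPt hδ hx ⟨1, one_pos, by simpa [hxp] using hfix⟩
  obtain ⟨n, hn⟩ := not_forall.1 hstay
  set y := F^[n] x
  have hyS : y ∈ S := hinv.iterate n hx
  have hy : y ∈ Icc (0 : ℝ) 1 ∪ Icc 2 3 := by
    have := hS.1 hyS
    simp only [mem_Icc, mem_union, not_and_or, not_le] at this hn ⊢
    rcases hn with h | h <;> [left; right] <;> constructor <;> linarith
  have hsep : ∀ n, (1 : ℝ) ≤ |F^[n] y - F^[n] (F y)| := by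
    refine le_abs_iterate_sub_iterate_apply (fun z hz => ?_) (fun z hz => ?_) ?_ hy
    · rw [hF1 z hz]; constructor <;> linarith [(hfm hz).1, (hfm hz).2]
    · rw [hF3 z hz]; constructor <;> linarith [hz.1, hz.2]
    · intro a ha b hb; rw [abs_sub_comm, le_abs]; left; linarith [ha.2, hb.1]
  exact hS.not_forall_le_abs_iterate_sub_iterate_apply hinv one_pos hyS hsep

/-- The square root construction applied to any continuous map
`f : [0,1] → [0,1]` yields a map `F : [0,3] → [0,3]` which has no nonempty invariant
`δ`-scrambled set, for any `δ > 0`. -/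
theorem no_invariant_scrambled_set_of_square_root
    (f F : ℝ → ℝ)
    (hf : ContinuousOn f (Set.Icc 0 1))
    (hfm : Set.MapsTo f (Set.Icc 0 1) (Set.Icc 0 1))
    (hF1 : ∀ x ∈ Set.Icc (0:ℝ) 1, F x = f x + 2)
    (hF2 : ∀ x ∈ Set.Icc (1:ℝ) 2, F x = (2 - x) * (f 1 + 2))
    (hF3 : ∀ x ∈ Set.Icc (2:ℝ) 3, F x = x - 2) :
    ∀ δ > 0, ∀ S : Set ℝ, ScrambledSet F (Set.Icc 0 3) δ S → Set.MapsTo F S S → S = ∅ :=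
  no_invariant_scrambled_set_of_square_root_general f F hfm hF1 hF2 hF3
end

section
/- Let 0 < a < 1 and let f be a continuous map from [0,1] onto itself such that f(0) = 0 = f(1), f(a) = 1, f is strictly increasing on [0, a], and f is strictly decreasing on [a, 1]. Then the following statements are equivalent: (a) f has a dense orbit, i.e., there is a point x in [0,1] whose orbit {fⁿ(x) : n ≥ 0} is dense in [0,1]; (b) the set of periodic points of f is dense in [0,1]; (c) f has sensitive dependence on initial conditions, i.e., there exists δ > 0 such that for every x in [0,1] and every open neighborhood V of x there exist a point y in V and a positive integer n with |fⁿ(x) − fⁿ(y)| ≥ δ. -/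
open Filter Set Function


-- generic helpers
lemma side_of_avoid {a : ℝ} {S : Set ℝ} (hS : IsPreconnected S) (ha : a ∉ S) :
    S ⊆ Set.Iio a ∨ S ⊆ Set.Ioi a := by
  by_contra h
  push_neg at h
  obtain ⟨h1, h2⟩ := h
  rw [Set.not_subset] at h1 h2
  obtain ⟨x, hx, hxa⟩ := h1
  obtain ⟨y, hy, hya⟩ := h2
  simp only [Set.mem_Iio, not_lt, Set.mem_Ioi] at hxa hya
  exact ha (hS.Icc_subset hy hx ⟨hya, hxa⟩)

lemma SMO_comp {g h : ℝ → ℝ} {K B : Set ℝ} (hg : StrictMonoOn g K)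
    (himg : ∀ x ∈ K, g x ∈ B) (hh : StrictMonoOn h B) :
    StrictMonoOn (fun x => h (g x)) K :=
  fun x hx y hy hxy => hh (himg x hx) (himg y hy) (hg hx hy hxy)

lemma SMO_comp_anti {g h : ℝ → ℝ} {K B : Set ℝ} (hg : StrictMonoOn g K)
    (himg : ∀ x ∈ K, g x ∈ B) (hh : StrictAntiOn h B) :
    StrictAntiOn (fun x => h (g x)) K :=
  fun x hx y hy hxy => hh (himg x hx) (himg y hy) (hg hx hy hxy)

lemma SAO_comp {g h : ℝ → ℝ} {K B : Set ℝ} (hg : StrictAntiOn g K)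
    (himg : ∀ x ∈ K, g x ∈ B) (hh : StrictMonoOn h B) :
    StrictAntiOn (fun x => h (g x)) K :=
  fun x hx y hy hxy => hh (himg y hy) (himg x hx) (hg hx hy hxy)

lemma SAO_comp_anti {g h : ℝ → ℝ} {K B : Set ℝ} (hg : StrictAntiOn g K)
    (himg : ∀ x ∈ K, g x ∈ B) (hh : StrictAntiOn h B) :
    StrictMonoOn (fun x => h (g x)) K :=
  fun x hx y hy hxy => hh (himg y hy) (himg x hx) (hg hx hy hxy)






/-- Bundle of unimodality hypotheses. -/
structure UD (a : ℝ) (f : ℝ → ℝ) : Prop where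
  ha0 : 0 < a
  ha1 : a < 1
  hf : ContinuousOn f (Set.Icc 0 1)
  hm : Set.MapsTo f (Set.Icc 0 1) (Set.Icc 0 1)
  h0 : f 0 = 0
  h1 : f 1 = 0
  hfa : f a = 1
  hmono : StrictMonoOn f (Set.Icc 0 a)
  hanti : StrictAntiOn f (Set.Icc a 1)

namespace UD

variable {a : ℝ} {f : ℝ → ℝ} (H : UD a f)
include H

lemma haI : a ∈ Set.Icc (0:ℝ) 1 := ⟨H.ha0.le, H.ha1.le⟩

lemma hsubL : Set.Icc 0 a ⊆ Set.Icc (0:ℝ) 1 := Set.Icc_subset_Icc le_rfl H.ha1.le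

lemma hsubR : Set.Icc a 1 ⊆ Set.Icc (0:ℝ) 1 := Set.Icc_subset_Icc H.ha0.le le_rfl

lemma iter_mapsTo (n : ℕ) : Set.MapsTo (f^[n]) (Set.Icc 0 1) (Set.Icc 0 1) :=
  H.hm.iterate n

lemma iter_contOn (n : ℕ) : ContinuousOn (f^[n]) (Set.Icc 0 1) := by
  induction n with
  | zero => simpa using continuousOn_id
  | succ n ih =>
    rw [Function.iterate_succ']
    exact H.hf.comp ih (H.iter_mapsTo n)

lemma img_mono {u v : ℝ} (hu : 0 ≤ u) (huv : u ≤ v) (hv : v ≤ a) :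
    f '' Set.Icc u v = Set.Icc (f u) (f v) := by
  have hsub : Set.Icc u v ⊆ Set.Icc 0 a := Set.Icc_subset_Icc hu hv
  have hcont : ContinuousOn f (Set.Icc u v) := H.hf.mono (hsub.trans H.hsubL)
  apply Set.Subset.antisymm
  · rintro _ ⟨x, hx, rfl⟩
    exact ⟨H.hmono.monotoneOn (hsub ⟨le_refl u, huv⟩) (hsub hx) hx.1,
      H.hmono.monotoneOn (hsub hx) (hsub ⟨huv, le_refl v⟩) hx.2⟩
  · exact intermediate_value_Icc huv hcont

lemma img_anti {u v : ℝ} (hu : a ≤ u) (huv : u ≤ v) (hv : v ≤ 1) :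
    f '' Set.Icc u v = Set.Icc (f v) (f u) := by
  have hsub : Set.Icc u v ⊆ Set.Icc a 1 := Set.Icc_subset_Icc hu hv
  have hcont : ContinuousOn f (Set.Icc u v) := H.hf.mono (hsub.trans H.hsubR)
  apply Set.Subset.antisymm
  · rintro _ ⟨x, hx, rfl⟩
    exact ⟨H.hanti.antitoneOn (hsub hx) (hsub ⟨huv, le_refl v⟩) hx.2,
      H.hanti.antitoneOn (hsub ⟨le_refl u, huv⟩) (hsub hx) hx.1⟩
  · exact intermediate_value_Icc' huv hcont

lemma full_left : f '' Set.Icc 0 a = Set.Icc 0 1 := by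
  rw [H.img_mono le_rfl H.ha0.le le_rfl, H.h0, H.hfa]

lemma full_right : f '' Set.Icc a 1 = Set.Icc 0 1 := by
  rw [H.img_anti le_rfl H.ha1.le le_rfl, H.h1, H.hfa]



lemma img_step {u v : ℝ} (huv : u < v) (hsub : Set.Icc u v ⊆ Set.Icc 0 1) :
    ∃ p q, p < q ∧ Set.Icc p q ⊆ Set.Icc 0 1 ∧ f '' Set.Icc u v = Set.Icc p q := by
  have hcont : ContinuousOn f (Set.Icc u v) := H.hf.mono hsub
  have hcomp : IsCompact (f '' Set.Icc u v) := (isCompact_Icc).image_of_continuousOn hcont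
  have hconn : IsConnected (f '' Set.Icc u v) :=
    ⟨(Set.nonempty_Icc.2 huv.le).image f, (isPreconnected_Icc).image f hcont⟩
  have heq := eq_Icc_of_connected_compact hconn hcomp
  refine ⟨sInf (f '' Set.Icc u v), sSup (f '' Set.Icc u v), ?_, ?_, heq⟩
  · -- nondegenerate: two distinct values
    obtain ⟨x, y, hx, hy, hne⟩ : ∃ x y, x ∈ Set.Icc u v ∧ y ∈ Set.Icc u v ∧ f x ≠ f y := by
      by_cases hua : u < a
      · refine ⟨u, min v a, Set.left_mem_Icc.2 huv.le, ⟨le_min huv.le hua.le, min_le_left _ _⟩, ?_⟩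
        have h1 : u ∈ Set.Icc 0 a := ⟨(hsub (Set.left_mem_Icc.2 huv.le)).1, hua.le⟩
        have h2 : min v a ∈ Set.Icc 0 a :=
          ⟨le_trans h1.1 (le_min huv.le hua.le), min_le_right _ _⟩
        exact ne_of_lt (H.hmono h1 h2 (lt_min huv hua))
      · push_neg at hua
        refine ⟨u, v, Set.left_mem_Icc.2 huv.le, Set.right_mem_Icc.2 huv.le, ?_⟩
        have h1 : u ∈ Set.Icc a 1 := ⟨hua, (hsub (Set.left_mem_Icc.2 huv.le)).2⟩
        have h2 : v ∈ Set.Icc a 1 := ⟨le_trans hua huv.le, (hsub (Set.right_mem_Icc.2 huv.le)).2⟩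
        exact ne_of_gt (H.hanti h1 h2 huv)
    have hxm : f x ∈ Set.Icc (sInf (f '' Set.Icc u v)) (sSup (f '' Set.Icc u v)) :=
      heq ▸ Set.mem_image_of_mem f hx
    have hym : f y ∈ Set.Icc (sInf (f '' Set.Icc u v)) (sSup (f '' Set.Icc u v)) :=
      heq ▸ Set.mem_image_of_mem f hy
    rcases lt_or_eq_of_le (hxm.1.trans hxm.2 : _) with h | h
    · exact h
    · exfalso
      have : f x = f y := by
        have := hxm; have := hym
        have hxx : f x = sInf (f '' Set.Icc u v) := le_antisymm (h ▸ hxm.2) hxm.1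
        have hyy : f y = sInf (f '' Set.Icc u v) := le_antisymm (h ▸ hym.2) hym.1
        rw [hxx, hyy]
      exact hne this
  · rw [← heq]
    rintro _ ⟨x, hx, rfl⟩
    exact H.hm (hsub hx)

lemma img_struct (n : ℕ) {u v : ℝ} (huv : u < v) (hsub : Set.Icc u v ⊆ Set.Icc 0 1) :
    ∃ p q, p < q ∧ Set.Icc p q ⊆ Set.Icc 0 1 ∧ f^[n] '' Set.Icc u v = Set.Icc p q := by
  induction n with
  | zero => exact ⟨u, v, huv, hsub, by simp⟩
  | succ n ih =>
    obtain ⟨p, q, hpq, hsub', heq⟩ := ih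
    obtain ⟨p', q', hpq', hsub'', heq'⟩ := H.img_step hpq hsub'
    refine ⟨p', q', hpq', hsub'', ?_⟩
    rw [Function.iterate_succ', Set.image_comp, heq, heq']

lemma iter_mono_or_anti {K : Set ℝ} (hK : K ⊆ Set.Icc 0 1)
    (hside : ∀ i : ℕ, f^[i] '' K ⊆ Set.Icc 0 a ∨ f^[i] '' K ⊆ Set.Icc a 1) :
    ∀ n, StrictMonoOn (f^[n]) K ∨ StrictAntiOn (f^[n]) K := by
  intro n
  induction n with
  | zero => left; exact fun x _ y _ h => h
  | succ n ih =>
    have hstep : ∀ x ∈ K, f^[n] x ∈ f^[n] '' K := fun x hx => Set.mem_image_of_mem _ hx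
    have hrw : StrictMonoOn (f^[n+1]) K ∨ StrictAntiOn (f^[n+1]) K ↔
        StrictMonoOn (fun x => f (f^[n] x)) K ∨ StrictAntiOn (fun x => f (f^[n] x)) K := by
      rw [Function.iterate_succ']
      rfl
    rw [hrw]
    rcases hside n with hs | hs
    · rcases ih with hmn | hmn
      · exact Or.inl (SMO_comp hmn (fun x hx => hs (hstep x hx)) H.hmono)
      · exact Or.inr (SAO_comp hmn (fun x hx => hs (hstep x hx)) H.hmono)
    · rcases ih with hmn | hmn
      · exact Or.inr (SMO_comp_anti hmn (fun x hx => hs (hstep x hx)) H.hanti)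
      · exact Or.inl (SAO_comp_anti hmn (fun x hx => hs (hstep x hx)) H.hanti)

lemma Mbar {α β : ℝ} (hab : α < β) (hsub : Set.Icc α β ⊆ Set.Icc 0 1)
    (havoid : ∀ n : ℕ, ∀ y ∈ Set.Icc α β, f^[n] y ≠ a) {k : ℕ}
    (hmeet : (f^[k] '' Set.Icc α β ∩ Set.Icc α β).Nonempty) :
    ∃ u v, u < v ∧ Set.Icc u v ⊆ Set.Icc 0 1 ∧ Set.Icc α β ⊆ Set.Icc u v ∧
      Set.MapsTo (f^[k]) (Set.Icc u v) (Set.Icc u v) ∧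
      (∀ i : ℕ, f^[i] '' Set.Icc u v ⊆ Set.Icc 0 a ∨ f^[i] '' Set.Icc u v ⊆ Set.Icc a 1) := by
  obtain ⟨z, hz1, hz2⟩ := hmeet
  obtain ⟨w, hw, hwz⟩ := hz1
  set L := Set.Icc α β with hL
  set piece : ℕ → Set ℝ := fun j => f^[j*k] '' L with hpiece
  have hpiece0 : piece 0 = L := by simp [hpiece]
  have hpiece_sub : ∀ j, piece j ⊆ Set.Icc 0 1 := by
    rintro j _ ⟨y, hy, rfl⟩; exact H.iter_mapsTo _ (hsub hy)
  have hpiece_conn : ∀ j, IsPreconnected (piece j) :=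
    fun j => (isPreconnected_Icc).image _ ((H.iter_contOn _).mono hsub)
  have hpt : ∀ j, f^[j*k] z ∈ piece (j+1) ∩ piece j := by
    intro j
    constructor
    · refine ⟨w, hw, ?_⟩
      rw [Nat.succ_mul, Function.iterate_add_apply, hwz]
    · exact Set.mem_image_of_mem _ hz2
  set M : ℕ → Set ℝ := fun j => ⋃ (l : ℕ) (_ : l ≤ j), piece l with hM
  have hMsucc : ∀ j, M (j+1) = M j ∪ piece (j+1) := by
    intro j
    ext x
    simp only [hM, Set.mem_iUnion, Set.mem_union]
    constructor
    · rintro ⟨l, hl, hx⟩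
      rcases Nat.lt_or_ge l (j+1) with h | h
      · exact Or.inl ⟨l, Nat.lt_succ_iff.mp h, hx⟩
      · exact Or.inr (le_antisymm hl h ▸ hx)
    · rintro (⟨l, hl, hx⟩ | hx)
      · exact ⟨l, hl.trans (Nat.le_succ j), hx⟩
      · exact ⟨j+1, le_rfl, hx⟩
  have hpieceM : ∀ j, piece j ⊆ M j := fun j x hx => Set.mem_iUnion.2 ⟨j, Set.mem_iUnion.2 ⟨le_rfl, hx⟩⟩
  have hMconn : ∀ j, IsPreconnected (M j) := by
    intro j
    induction j with
    | zero =>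
      have : M 0 = piece 0 := by
        ext x; simp only [hM, Set.mem_iUnion, Nat.le_zero]
        exact ⟨fun ⟨l, hl, hx⟩ => hl ▸ hx, fun hx => ⟨0, rfl, hx⟩⟩
      rw [this]; exact hpiece_conn 0
    | succ j ih =>
      rw [hMsucc j]
      exact IsPreconnected.union (f^[j*k] z) (hpieceM j (hpt j).2) (hpt j).1 ih
        (hpiece_conn (j+1))
  have hMα : ∀ j, α ∈ M j := by
    intro j
    refine Set.mem_iUnion.2 ⟨0, Set.mem_iUnion.2 ⟨Nat.zero_le j, ?_⟩⟩
    rw [hpiece0]; exact Set.left_mem_Icc.2 hab.le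
  set Mset : Set ℝ := ⋃ j, M j with hMset
  have hMconnU : IsPreconnected Mset :=
    isPreconnected_iUnion ⟨α, Set.mem_iInter.2 hMα⟩ hMconn
  have hMchar : Mset = ⋃ j, piece j := by
    apply Set.Subset.antisymm
    · rintro x hx
      obtain ⟨j, hj⟩ := Set.mem_iUnion.1 hx
      obtain ⟨l, hl⟩ := Set.mem_iUnion.1 hj
      obtain ⟨_, hx⟩ := Set.mem_iUnion.1 hl
      exact Set.mem_iUnion.2 ⟨l, hx⟩
    · rintro x hx
      obtain ⟨j, hj⟩ := Set.mem_iUnion.1 hx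
      exact Set.mem_iUnion.2 ⟨j, hpieceM j hj⟩
  have hMsub : Mset ⊆ Set.Icc 0 1 := by
    rw [hMchar]; exact Set.iUnion_subset hpiece_sub
  have hLM : L ⊆ Mset := by
    rw [hMchar]
    intro x hx
    exact Set.mem_iUnion.2 ⟨0, hpiece0 ▸ hx⟩
  have himg_eq : ∀ i : ℕ, f^[i] '' Mset = ⋃ j, f^[i] '' piece j := by
    intro i; rw [hMchar, Set.image_iUnion]
  have ha_not : ∀ i : ℕ, a ∉ f^[i] '' Mset := by
    intro i hmem
    rw [himg_eq] at hmem
    obtain ⟨j, hj⟩ := Set.mem_iUnion.1 hmem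
    obtain ⟨x, hx, hxa⟩ := hj
    obtain ⟨y, hy, rfl⟩ := hx
    rw [← Function.iterate_add_apply] at hxa
    exact havoid _ y hy hxa
  have hside0 : ∀ i : ℕ, f^[i] '' Mset ⊆ Set.Iio a ∨ f^[i] '' Mset ⊆ Set.Ioi a :=
    fun i => side_of_avoid (hMconnU.image _ ((H.iter_contOn i).mono hMsub)) (ha_not i)
  -- closure
  have hclsub : closure Mset ⊆ Set.Icc 0 1 := closure_minimal hMsub isClosed_Icc
  have hcomp : IsCompact (closure Mset) :=
    IsCompact.of_isClosed_subset isCompact_Icc isClosed_closure hclsub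
  have hconn : IsConnected (closure Mset) :=
    ⟨⟨α, subset_closure (Set.mem_iUnion.2 ⟨0, hMα 0⟩)⟩, hMconnU.closure⟩
  have heq := eq_Icc_of_connected_compact hconn hcomp
  set u := sInf (closure Mset)
  set v := sSup (closure Mset)
  have hLcl : L ⊆ closure Mset := hLM.trans subset_closure
  have hαv : α ∈ Set.Icc u v := heq ▸ hLcl (Set.left_mem_Icc.2 hab.le)
  have hβv : β ∈ Set.Icc u v := heq ▸ hLcl (Set.right_mem_Icc.2 hab.le)
  have himgcl : ∀ i : ℕ, f^[i] '' closure Mset ⊆ closure (f^[i] '' Mset) :=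
    fun i => ContinuousOn.image_closure ((H.iter_contOn i).mono hclsub)
  refine ⟨u, v, lt_of_le_of_lt hαv.1 (lt_of_lt_of_le hab hβv.2), heq ▸ hclsub, heq ▸ hLcl, ?_, ?_⟩
  · -- MapsTo f^[k]
    rw [← heq]
    have hstep : f^[k] '' Mset ⊆ Mset := by
      rw [hMchar, Set.image_iUnion]
      refine Set.iUnion_subset fun j => ?_
      rintro _ ⟨_, ⟨y, hy, rfl⟩, rfl⟩
      refine Set.mem_iUnion.2 ⟨j+1, ⟨y, hy, ?_⟩⟩
      rw [Nat.succ_mul, Nat.add_comm, Function.iterate_add_apply]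
    intro x hx
    exact closure_mono hstep ((himgcl k) (Set.mem_image_of_mem _ hx))
  · -- sides
    intro i
    have hsubI : f^[i] '' Set.Icc u v ⊆ Set.Icc 0 1 := by
      rintro _ ⟨x, hx, rfl⟩
      exact H.iter_mapsTo i ((heq ▸ hclsub) hx)
    rcases hside0 i with hs | hs
    · left
      intro x hx
      have hxc : x ∈ closure (f^[i] '' Mset) := himgcl i (heq ▸ hx)
      have : x ∈ Set.Iic a := by
        have := closure_mono hs hxc
        rwa [closure_Iio] at this
      exact ⟨(hsubI hx).1, this⟩
    · right
      intro x hx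
      have hxc : x ∈ closure (f^[i] '' Mset) := himgcl i (heq ▸ hx)
      have : x ∈ Set.Ici a := by
        have := closure_mono hs hxc
        rwa [closure_Ioi] at this
      exact ⟨this, (hsubI hx).2⟩

-- generic iterate helpers (inside UD namespace but H-free; use omit)
omit H in
lemma iterate_contOn' {h : ℝ → ℝ} {S : Set ℝ} (hc : ContinuousOn h S)
    (hmap : Set.MapsTo h S S) : ∀ j : ℕ, ContinuousOn (h^[j]) S := by
  intro j
  induction j with
  | zero => simpa using continuousOn_id
  | succ j ih => rw [Function.iterate_succ']; exact hc.comp ih (hmap.iterate j)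

omit H in
lemma iterate_SMO {h : ℝ → ℝ} {S : Set ℝ} (hsm : StrictMonoOn h S)
    (hmap : Set.MapsTo h S S) : ∀ j : ℕ, StrictMonoOn (h^[j]) S := by
  intro j
  induction j with
  | zero => exact fun x _ y _ hxy => hxy
  | succ j ih =>
    have : StrictMonoOn (fun x => h (h^[j] x)) S :=
      SMO_comp ih (fun x hx => hmap.iterate j hx) hsm
    rw [Function.iterate_succ']
    exact this

omit H in
lemma fin_unif {S : Set ℝ} (hS : IsCompact S) (N : ℕ) (F : ℕ → ℝ → ℝ)
    (hF : ∀ i, i < N → ContinuousOn (F i) S) {δ : ℝ} (hδ : 0 < δ) :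
    ∃ ε, 0 < ε ∧ ∀ s ∈ S, ∀ t ∈ S, |s - t| ≤ ε → ∀ i < N, |F i s - F i t| ≤ δ := by
  induction N with
  | zero => exact ⟨1, one_pos, fun s _ t _ _ i hi => absurd hi (Nat.not_lt_zero i)⟩
  | succ N ih =>
    obtain ⟨ε₁, hε₁, h₁⟩ := ih (fun i hi => hF i (hi.trans (Nat.lt_succ_self N)))
    have huc : UniformContinuousOn (F N) S :=
      hS.uniformContinuousOn_of_continuous (hF N (Nat.lt_succ_self N))
    obtain ⟨ε₂, hε₂, h₂⟩ := (Metric.uniformContinuousOn_iff_le.1 huc) δ hδ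
    refine ⟨min ε₁ ε₂, lt_min hε₁ hε₂, fun s hs t ht hst i hi => ?_⟩
    rcases Nat.lt_or_ge i N with h | h
    · exact h₁ s hs t ht (hst.trans (min_le_left _ _)) i h
    · have : i = N := le_antisymm (Nat.lt_succ_iff.1 hi) h
      subst this
      have := h₂ s hs t ht (le_trans (by rwa [Real.dist_eq]) (min_le_right ε₁ ε₂))
      rwa [Real.dist_eq] at this

omit H in
lemma tendsto_fixed {w : ℝ → ℝ} {S : Set ℝ} (hw : ContinuousOn w S) (hSc : IsClosed S)
    {s : ℕ → ℝ} (hs : ∀ j, s j ∈ S) (hrec : ∀ j, s (j+1) = w (s j))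
    (hmn : Monotone s) (hbdd : BddAbove (Set.range s)) :
    ∃ t ∈ S, w t = t ∧ (∀ j, s j ≤ t) ∧ Filter.Tendsto s Filter.atTop (nhds t) := by
  set t := ⨆ j, s j with htdef
  have ht : Filter.Tendsto s Filter.atTop (nhds t) := tendsto_atTop_ciSup hmn hbdd
  have htmem : t ∈ S := hSc.mem_of_tendsto ht (Filter.Eventually.of_forall hs)
  have hin : Filter.Tendsto s Filter.atTop (nhdsWithin t S) :=
    tendsto_nhdsWithin_iff.mpr ⟨ht, Filter.Eventually.of_forall hs⟩
  have h1 : Filter.Tendsto (fun j => w (s j)) Filter.atTop (nhds (w t)) :=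
    (hw t htmem).tendsto.comp hin
  have h2 : Filter.Tendsto (fun j => s (j+1)) Filter.atTop (nhds t) :=
    ht.comp (Filter.tendsto_add_atTop_nat 1)
  have h3 : Filter.Tendsto (fun j => s (j+1)) Filter.atTop (nhds (w t)) :=
    h1.congr (fun j => (hrec j).symm)
  exact ⟨t, htmem, tendsto_nhds_unique h3 h2, fun j => le_ciSup hbdd j, ht⟩

omit H in
lemma core_above {h : ℝ → ℝ} {u v x : ℝ}
    (hcont : ContinuousOn h (Set.Icc u v)) (hmap : Set.MapsTo h (Set.Icc u v) (Set.Icc u v))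
    (hsm : StrictMonoOn h (Set.Icc u v)) (hx : x ∈ Set.Ioo u v) (hxa : x < h x)
    {η : ℝ} (hη : 0 < η) :
    ∃ z ε, 0 < ε ∧ Set.Icc (z-ε) (z+ε) ⊆ Set.Ioo u v ∧
      ∀ y ∈ Set.Icc (z-ε) (z+ε), ∀ j : ℕ, |h^[j] z - h^[j] y| ≤ η := by
  have huv : u < v := hx.1.trans hx.2
  have hxM : x ∈ Set.Icc u v := ⟨hx.1.le, hx.2.le⟩
  have hvM : v ∈ Set.Icc u v := Set.right_mem_Icc.2 huv.le
  have hsubxv : Set.Icc x v ⊆ Set.Icc u v := Set.Icc_subset_Icc hx.1.le le_rfl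
  set φ : ℝ → ℝ := fun t => h t - t with hφdef
  have hφ : ContinuousOn φ (Set.Icc x v) := ((hcont.mono hsubxv).sub continuousOn_id)
  set Fx : Set ℝ := Set.Icc x v ∩ φ ⁻¹' {0} with hFxdef
  have hFxne : Fx.Nonempty := by
    have h0m : (0:ℝ) ∈ Set.Icc (φ v) (φ x) := by
      constructor
      · simp only [hφdef]; have := (hmap hvM).2; linarith
      · simp only [hφdef]; linarith
    obtain ⟨t, ht, htφ⟩ := intermediate_value_Icc' hx.2.le hφ h0m
    exact ⟨t, ht, by simpa using htφ⟩
  have hFclosed : IsClosed Fx :=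
    hφ.preimage_isClosed_of_isClosed isClosed_Icc isClosed_singleton
  have hFbdd : BddBelow Fx := (bddBelow_Icc (a := v) (b := x)).mono Set.inter_subset_left
  set v' := sInf Fx with hv'def
  have hv'mem : v' ∈ Fx := hFclosed.csInf_mem hFxne hFbdd
  have hv'fix : h v' = v' := by
    have := hv'mem.2; simp only [hφdef, Set.mem_preimage, Set.mem_singleton_iff] at this
    linarith
  have hv'Icc : v' ∈ Set.Icc x v := hv'mem.1
  have hv'M : v' ∈ Set.Icc u v := hsubxv hv'Icc
  have hxv' : x < v' := by
    rcases lt_or_eq_of_le hv'Icc.1 with h' | h'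
    · exact h'
    · exfalso; rw [← h'] at hv'fix; linarith
  have hgt : ∀ t ∈ Set.Ioo x v', t < h t := by
    intro t ht
    have htIcc : t ∈ Set.Icc x v := ⟨ht.1.le, ht.2.le.trans hv'Icc.2⟩
    rcases lt_trichotomy (h t) t with h' | h' | h'
    · exfalso
      have h0m : (0:ℝ) ∈ Set.Icc (φ t) (φ x) := by
        constructor
        · simp only [hφdef]; linarith
        · simp only [hφdef]; linarith
      obtain ⟨t₀, ht₀, ht₀φ⟩ := intermediate_value_Icc' ht.1.le (hφ.mono (Set.Icc_subset_Icc le_rfl htIcc.2)) h0m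
      have : t₀ ∈ Fx := ⟨⟨ht₀.1, ht₀.2.trans htIcc.2⟩, by simpa using ht₀φ⟩
      have := csInf_le hFbdd this
      have : v' ≤ t := le_trans this ht₀.2
      linarith [ht.2]
    · exfalso
      have : t ∈ Fx := ⟨htIcc, by simp [hφdef, h']⟩
      have := csInf_le hFbdd this
      linarith [ht.2]
    · exact h'
  have hmapx : ∀ t ∈ Set.Ioo x v', h t ∈ Set.Ioo x v' := by
    intro t ht
    refine ⟨ht.1.trans (hgt t ht), ?_⟩
    have := hsm (hsubxv ⟨ht.1.le, ht.2.le.trans hv'Icc.2⟩) hv'M ht.2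
    rwa [hv'fix] at this
  set z := x + (v' - x)/2 with hzdef
  set ε₀ := (v' - x)/4 with hε₀def
  have hε₀ : 0 < ε₀ := by simp only [hε₀def]; linarith
  set w := z - ε₀ with hwdef
  have hwmem : w ∈ Set.Ioo x v' := by
    constructor <;> (simp only [hwdef, hzdef, hε₀def]; linarith)
  -- orbit of w
  have hsmem : ∀ j : ℕ, h^[j] w ∈ Set.Ioo x v' := by
    intro j
    induction j with
    | zero => simpa using hwmem
    | succ j ih => rw [Function.iterate_succ_apply']; exact hmapx _ ih
  have hsrec : ∀ j : ℕ, h^[j+1] w = h (h^[j] w) := fun j => Function.iterate_succ_apply' h j w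
  have hsmono : Monotone (fun j => h^[j] w) := by
    apply monotone_nat_of_le_succ
    intro j
    rw [hsrec j]
    exact (hgt _ (hsmem j)).le
  have hbdd : BddAbove (Set.range (fun j => h^[j] w)) := by
    refine ⟨v', ?_⟩
    rintro _ ⟨j, rfl⟩
    exact (hsmem j).2.le
  obtain ⟨tst, htmem, htfix, htub, httend⟩ :=
    tendsto_fixed (w := h) (S := Set.Icc x v') (hcont.mono (Set.Icc_subset_Icc hx.1.le hv'M.2))
      isClosed_Icc (fun j => Set.mem_Icc_of_Ioo (hsmem j)) hsrec hsmono hbdd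
  have htst : tst = v' := by
    have h1 : tst ∈ Fx := by
      refine ⟨⟨htmem.1, htmem.2.trans hv'Icc.2⟩, ?_⟩
      simp [hφdef, htfix]
    have := csInf_le hFbdd h1
    exact le_antisymm htmem.2 this
  rw [htst] at httend
  obtain ⟨J₁, hJ₁⟩ := (Metric.tendsto_atTop.1 httend) η hη
  obtain ⟨ε₁, hε₁, hunif⟩ := fin_unif isCompact_Icc J₁ (fun j => h^[j])
    (fun i _ => iterate_contOn' hcont hmap i) hη
  have hzIoo : z ∈ Set.Ioo x v' := by
    constructor <;> (simp only [hzdef]; linarith)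
  have hzv' : z + ε₀ < v' := by simp only [hzdef, hε₀def]; linarith
  refine ⟨z, min ε₀ ε₁, lt_min hε₀ hε₁, ?_, ?_⟩
  · intro y hy
    have h1 := hy.1
    have h2 := hy.2
    have hminle : min ε₀ ε₁ ≤ ε₀ := min_le_left _ _
    constructor
    · have : w ≤ y := by simp only [hwdef] at *; linarith
      exact lt_of_lt_of_le (hx.1.trans hwmem.1) this
    · have : y ≤ z + ε₀ := by linarith
      exact lt_of_le_of_lt this (hzv'.trans_le hv'Icc.2)
  · intro y hy j
    have hminle : min ε₀ ε₁ ≤ ε₀ := min_le_left _ _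
    have hwy : w ≤ y := by simp only [hwdef] at *; linarith [hy.1]
    have hyv' : y < v' := by linarith [hy.2, hzv']
    have hyM : y ∈ Set.Icc u v :=
      ⟨(hx.1.trans (lt_of_lt_of_le hwmem.1 hwy)).le, (hyv'.trans_le hv'M.2).le⟩
    have hzM : z ∈ Set.Icc u v := ⟨(hx.1.trans hzIoo.1).le, (hzIoo.2.trans_le hv'M.2).le⟩
    have hwM : w ∈ Set.Icc u v := ⟨(hx.1.trans hwmem.1).le, (hwmem.2.trans_le hv'M.2).le⟩
    rcases Nat.lt_or_ge j J₁ with hj | hj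
    · refine hunif z hzM y hyM ?_ j hj
      rw [abs_sub_le_iff]
      constructor <;> linarith [hy.1, hy.2, min_le_right ε₀ ε₁]
    · have hsj := hJ₁ j hj
      rw [Real.dist_eq, abs_sub_lt_iff] at hsj
      have hmj := (iterate_SMO hsm hmap j).monotoneOn
      have hv'fixj : h^[j] v' = v' := Function.iterate_fixed hv'fix j
      have hA1 : h^[j] w ≤ h^[j] z := hmj hwM hzM (by simp only [hwdef]; linarith)
      have hA2 : h^[j] z ≤ v' := by
        have := hmj hzM hv'M hzIoo.2.le
        rwa [hv'fixj] at this
      have hB1 : h^[j] w ≤ h^[j] y := hmj hwM hyM hwy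
      have hB2 : h^[j] y ≤ v' := by
        have := hmj hyM hv'M hyv'.le
        rwa [hv'fixj] at this
      rw [abs_sub_le_iff]
      constructor <;> linarith [hsj.1, hsj.2]

omit H in
lemma core {h : ℝ → ℝ} {u v : ℝ} (huv : u < v) (hcont : ContinuousOn h (Set.Icc u v))
    (hmap : Set.MapsTo h (Set.Icc u v) (Set.Icc u v)) (hsm : StrictMonoOn h (Set.Icc u v))
    {η : ℝ} (hη : 0 < η) :
    ∃ z ε, 0 < ε ∧ Set.Icc (z-ε) (z+ε) ⊆ Set.Ioo u v ∧
      ∀ y ∈ Set.Icc (z-ε) (z+ε), ∀ j : ℕ, |h^[j] z - h^[j] y| ≤ η := by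
  by_cases hid : ∀ t ∈ Set.Ioo u v, h t = t
  · have hfix : ∀ t ∈ Set.Ioo u v, ∀ j : ℕ, h^[j] t = t := by
      intro t ht j
      induction j with
      | zero => simp
      | succ j ih => rw [Function.iterate_succ_apply', ih, hid t ht]
    refine ⟨(u+v)/2, min η ((v-u)/4), lt_min hη (by linarith), ?_, ?_⟩
    · intro y hy
      have h1 := hy.1; have h2 := hy.2
      have : min η ((v-u)/4) ≤ (v-u)/4 := min_le_right _ _
      constructor <;> linarith
    · intro y hy j
      have hyIoo : y ∈ Set.Ioo u v := by
        have h1 := hy.1; have h2 := hy.2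
        have : min η ((v-u)/4) ≤ (v-u)/4 := min_le_right _ _
        constructor <;> linarith
      have hzIoo : ((u+v)/2) ∈ Set.Ioo u v := by constructor <;> linarith
      rw [hfix _ hzIoo j, hfix _ hyIoo j, abs_sub_le_iff]
      have h1 := hy.1; have h2 := hy.2
      have : min η ((v-u)/4) ≤ η := min_le_left _ _
      constructor <;> linarith
  · push_neg at hid
    obtain ⟨x, hxIoo, hne⟩ := hid
    rcases hne.lt_or_gt with hlt | hgt
    · -- h x < x : conjugate by negation
      set g : ℝ → ℝ := fun t => -h (-t) with hgdef
      have hgiter : ∀ (j : ℕ) (t : ℝ), g^[j] t = -(h^[j] (-t)) := by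
        intro j
        induction j with
        | zero => intro t; simp
        | succ j ih =>
          intro t
          rw [Function.iterate_succ_apply', Function.iterate_succ_apply', ih]
          simp [hgdef]
      have hmapneg : ∀ t ∈ Set.Icc (-v) (-u), -t ∈ Set.Icc u v :=
        fun t ht => ⟨by linarith [ht.2], by linarith [ht.1]⟩
      have hcont' : ContinuousOn g (Set.Icc (-v) (-u)) := by
        have : ContinuousOn (fun t : ℝ => h (-t)) (Set.Icc (-v) (-u)) :=
          hcont.comp continuous_neg.continuousOn hmapneg
        exact this.neg
      have hmap' : Set.MapsTo g (Set.Icc (-v) (-u)) (Set.Icc (-v) (-u)) := by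
        intro t ht
        have := hmap (hmapneg t ht)
        simp only [hgdef, Set.mem_Icc]
        exact ⟨by linarith [this.2], by linarith [this.1]⟩
      have hsm' : StrictMonoOn g (Set.Icc (-v) (-u)) := by
        intro s hs t ht hst
        have : h (-t) < h (-s) := hsm (hmapneg t ht) (hmapneg s hs) (by linarith)
        simp only [hgdef]
        linarith
      have hx' : -x ∈ Set.Ioo (-v) (-u) := ⟨by linarith [hxIoo.2], by linarith [hxIoo.1]⟩
      have hgx : -x < g (-x) := by simp only [hgdef, neg_neg]; linarith
      obtain ⟨zh, ε, hε, hsub, hbound⟩ := core_above hcont' hmap' hsm' hx' hgx hη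
      refine ⟨-zh, ε, hε, ?_, ?_⟩
      · intro y hy
        have h1 := hy.1; have h2 := hy.2
        have : -y ∈ Set.Ioo (-v) (-u) := hsub ⟨by linarith, by linarith⟩
        exact ⟨by linarith [this.2], by linarith [this.1]⟩
      · intro y hy j
        have h1 := hy.1; have h2 := hy.2
        have hny : -y ∈ Set.Icc (zh-ε) (zh+ε) := ⟨by linarith, by linarith⟩
        have hb := hbound (-y) hny j
        rw [hgiter j zh, hgiter j (-y), neg_neg] at hb
        have : h^[j] (-zh) = -(g^[j] zh) := by rw [hgiter j zh, neg_neg]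
        calc |h^[j] (-zh) - h^[j] y| = |(-(h^[j] (-zh))) - (-(h^[j] y))| := by
              rw [← abs_neg]; ring_nf
          _ ≤ η := by
              rw [abs_sub_le_iff] at hb ⊢
              constructor <;> linarith [hb.1, hb.2]
    · exact core_above hcont hmap hsm hxIoo hgt hη

lemma hgt_of_no_fix (hnf : ∀ t ∈ Set.Ioo 0 a, f t ≠ t) : ∀ x ∈ Set.Ioo 0 a, x < f x := by
  intro x hx
  rcases lt_trichotomy (f x) x with h | h | h
  · exfalso
    set φ : ℝ → ℝ := fun t => f t - t with hφdef
    have hφ : ContinuousOn φ (Set.Icc x a) :=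
      ((H.hf.mono ((Set.Icc_subset_Icc hx.1.le le_rfl).trans H.hsubL)).sub continuousOn_id)
    have h0m : (0:ℝ) ∈ Set.Icc (φ x) (φ a) := by
      constructor
      · simp only [hφdef]; linarith
      · simp only [hφdef, H.hfa]; linarith [H.ha1]
    obtain ⟨t, ht, htφ⟩ := intermediate_value_Icc hx.2.le hφ h0m
    have htfix : f t = t := by simp only [hφdef] at htφ; linarith
    have hta : t < a := by
      rcases lt_or_eq_of_le ht.2 with h' | h'
      · exact h'
      · exfalso; rw [h'] at htfix; rw [H.hfa] at htfix; linarith [H.ha1]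
    exact hnf t ⟨lt_of_lt_of_le hx.1 ht.1, hta⟩ htfix
  · exact absurd h (hnf x hx)
  · exact h

lemma mapsTo_fixed_interval {w : ℝ} (hw0 : w ∈ Set.Ioo 0 a) (hw : f w = w) :
    Set.MapsTo f (Set.Icc 0 w) (Set.Icc 0 w) := by
  intro t ht
  have himg : f '' Set.Icc 0 w = Set.Icc 0 w := by
    rw [H.img_mono le_rfl hw0.1.le hw0.2.le, H.h0, hw]
  rw [← himg]
  exact Set.mem_image_of_mem f ht

lemma no_dense_orbit_of_fix {w : ℝ} (hw0 : w ∈ Set.Ioo 0 a) (hw : f w = w) :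
    ¬ ∃ x ∈ Set.Icc (0:ℝ) 1, Set.Icc (0:ℝ) 1 ⊆ closure {y : ℝ | ∃ n : ℕ, f^[n] x = y} := by
  rintro ⟨x, hxI, hdense⟩
  have hw1 : w < 1 := hw0.2.trans H.ha1
  have hmapw := H.mapsTo_fixed_interval hw0 hw
  -- the orbit visits Ioo 0 w
  have hz₀ : (w/2) ∈ Set.Icc (0:ℝ) 1 := ⟨by linarith [hw0.1], by linarith⟩
  obtain ⟨y, hyorb, hydist⟩ :=
    Metric.mem_closure_iff.1 (hdense hz₀) (w/2) (by linarith [hw0.1])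
  obtain ⟨t, hty⟩ := hyorb
  have hyIoo : y ∈ Set.Ioo 0 w := by
    rw [Real.dist_eq, abs_sub_lt_iff] at hydist
    constructor <;> linarith [hydist.1, hydist.2]
  -- tail of the orbit stays in Icc 0 w
  have htail : ∀ m : ℕ, f^[m] (f^[t] x) ∈ Set.Icc 0 w := by
    intro m
    induction m with
    | zero => simpa [hty] using ⟨hyIoo.1.le, hyIoo.2.le⟩
    | succ m ih => rw [Function.iterate_succ_apply']; exact hmapw ih
  set Fset : Set ℝ := (fun n : ℕ => f^[n] x) '' Set.Iio t with hFdef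
  have hFfin : Fset.Finite := (Set.finite_Iio t).image _
  have horb : {y : ℝ | ∃ n : ℕ, f^[n] x = y} ⊆ Fset ∪ Set.Icc 0 w := by
    rintro _ ⟨n, rfl⟩
    rcases Nat.lt_or_ge n t with h | h
    · exact Or.inl ⟨n, h, rfl⟩
    · right
      obtain ⟨m, rfl⟩ := Nat.exists_eq_add_of_le h
      rw [Nat.add_comm, Function.iterate_add_apply]
      exact htail m
  have hclosed : IsClosed (Fset ∪ Set.Icc 0 w) := hFfin.isClosed.union isClosed_Icc
  have hsub2 : Set.Icc (0:ℝ) 1 ⊆ Fset ∪ Set.Icc 0 w := by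
    intro z hz
    exact closure_minimal horb hclosed (hdense hz)
  obtain ⟨z, hz⟩ := ((Set.Ioc_infinite hw1).diff hFfin).nonempty
  have hzI : z ∈ Set.Icc (0:ℝ) 1 := ⟨(hw0.1.trans hz.1.1).le, hz.1.2⟩
  rcases hsub2 hzI with h | h
  · exact hz.2 h
  · linarith [h.2, hz.1.1]

omit H in
lemma periodic_fixed_of_invariant {g : ℝ → ℝ} {p q : ℝ}
    (hmono : StrictMonoOn g (Set.Icc p q)) (hmapg : Set.MapsTo g (Set.Icc p q) (Set.Icc p q))
    {r : ℝ} (hr : r ∈ Set.Icc p q) {m : ℕ} (hm : 1 ≤ m) (hgm : g^[m] r = r) : g r = r := by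
  have hmem : ∀ j : ℕ, g^[j] r ∈ Set.Icc p q := fun j => hmapg.iterate j hr
  rcases lt_trichotomy (g r) r with h | h | h
  · exfalso
    have key : ∀ j : ℕ, 1 ≤ j → g^[j] r < r := by
      intro j hj
      induction j with
      | zero => omega
      | succ j ih =>
        rcases Nat.lt_or_ge j 1 with h' | h'
        · interval_cases j
          simpa using h
        · have hlt := ih h'
          rw [Function.iterate_succ_apply']
          calc g (g^[j] r) < g r := hmono (hmem j) hr hlt
            _ < r := h
    have := key m hm
    rw [hgm] at this
    exact lt_irrefl r this
  · exact h
  · exfalso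
    have key : ∀ j : ℕ, 1 ≤ j → r < g^[j] r := by
      intro j hj
      induction j with
      | zero => omega
      | succ j ih =>
        rcases Nat.lt_or_ge j 1 with h' | h'
        · interval_cases j
          simpa using h
        · have hlt := ih h'
          rw [Function.iterate_succ_apply']
          calc r < g r := h
            _ < g (g^[j] r) := hmono hr (hmem j) hlt
    have := key m hm
    rw [hgm] at this
    exact lt_irrefl r this

lemma no_dense_per_of_fix {w : ℝ} (hw0 : w ∈ Set.Ioo 0 a) (hw : f w = w) :
    ¬ (Set.Icc (0:ℝ) 1 ⊆ closure {p : ℝ | p ∈ Set.Icc (0:ℝ) 1 ∧ PerPt f p}) := by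
  intro hdense
  have hw1 : w < 1 := hw0.2.trans H.ha1
  have hmapw := H.mapsTo_fixed_interval hw0 hw
  have hsubw : Set.Icc 0 w ⊆ Set.Icc (0:ℝ) 1 := Set.Icc_subset_Icc le_rfl hw1.le
  have hsmw : StrictMonoOn f (Set.Icc 0 w) :=
    H.hmono.mono (Set.Icc_subset_Icc le_rfl hw0.2.le)
  -- f = id on [0,w]
  have hfid : ∀ t ∈ Set.Icc 0 w, f t = t := by
    intro t ht
    rcases eq_or_lt_of_le ht.1 with h0t | h0t
    · rw [← h0t, H.h0]
    rcases eq_or_lt_of_le ht.2 with htw | htw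
    · rw [htw, hw]
    -- t interior
    by_contra hne
    set η := |f t - t| with hηdef
    have hη : 0 < η := abs_pos.2 (sub_ne_zero.2 hne)
    have hcwa : ContinuousWithinAt f (Set.Icc 0 w) t := (H.hf.mono hsubw) t ht
    obtain ⟨ρ, hρ, hρball⟩ := Metric.continuousWithinAt_iff.1 hcwa (η/2) (by linarith)
    set ρ' := min ρ (min (η/2) (min (t - 0) (w - t))) with hρ'def
    have hρ' : 0 < ρ' := by
      refine lt_min hρ (lt_min (by linarith) (lt_min (by linarith) (by linarith)))
    obtain ⟨r, hrmem, hrdist⟩ :=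
      Metric.mem_closure_iff.1 (hdense (hsubw ht)) ρ' hρ'
    obtain ⟨hrI, m, hm, hmr⟩ := hrmem
    have hrw : r ∈ Set.Icc 0 w := by
      rw [Real.dist_eq, abs_sub_lt_iff] at hrdist
      have h1 : ρ' ≤ t - 0 := le_trans (min_le_right _ _) (le_trans (min_le_right _ _) (min_le_left _ _))
      have h2 : ρ' ≤ w - t := le_trans (min_le_right _ _) (le_trans (min_le_right _ _) (min_le_right _ _))
      constructor <;> linarith [hrdist.1, hrdist.2]
    have hrfix : f r = r :=
      periodic_fixed_of_invariant hsmw hmapw hrw hm hmr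
    have hfr : dist (f r) (f t) < η/2 := by
      apply hρball hrw
      rw [dist_comm] at hrdist
      exact lt_of_lt_of_le hrdist (min_le_left _ _)
    have hρη : ρ' ≤ η/2 := le_trans (min_le_right _ _) (min_le_left _ _)
    rw [Real.dist_eq] at hfr hrdist
    have : |f t - t| < η := by
      calc |f t - t| ≤ |f t - f r| + |f r - t| := abs_sub_le _ _ _
        _ = |f t - f r| + |r - t| := by rw [hrfix]
        _ < η/2 + ρ' := by
            have h1 : |f t - f r| < η/2 := by rwa [abs_sub_comm] at hfr
            have h2 : |r - t| < ρ' := by rwa [abs_sub_comm] at hrdist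
            linarith
        _ ≤ η := by linarith
    exact absurd this (by rw [← hηdef]; exact lt_irrefl η)
  -- pick v₁ with f v₁ = w/2
  have h0m : (w/2) ∈ Set.Icc (f 1) (f a) := by
    rw [H.h1, H.hfa]; exact ⟨by linarith [hw0.1], by linarith⟩
  obtain ⟨v₁, hv₁mem, hv₁⟩ := intermediate_value_Icc' H.ha1.le (H.hf.mono H.hsubR) h0m
  have hv₁1 : v₁ < 1 := by
    rcases lt_or_eq_of_le hv₁mem.2 with h | h
    · exact h
    · exfalso; rw [h, H.h1] at hv₁; linarith [hw0.1]
  -- a periodic point in (v₁, 1]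
  obtain ⟨r, hrmem, hrdist⟩ := Metric.mem_closure_iff.1
    (hdense ⟨by linarith [hv₁mem.1, H.ha0], by linarith [hv₁1]⟩ : (v₁+1)/2 ∈ closure _)
    ((1 - v₁)/2) (by linarith)
  obtain ⟨hrI, m, hm, hmr⟩ := hrmem
  have hrIoc : r ∈ Set.Ioc v₁ 1 := by
    rw [Real.dist_eq, abs_sub_lt_iff] at hrdist
    constructor
    · linarith [hrdist.1]
    · exact hrI.2
  have hfrw : f r ∈ Set.Icc 0 w := by
    rcases eq_or_lt_of_le hrIoc.2 with h | h
    · rw [h, H.h1]; exact ⟨le_rfl, hw0.1.le⟩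
    · have : f r < f v₁ := H.hanti ⟨hv₁mem.1, hv₁mem.2⟩ ⟨hv₁mem.1.trans hrIoc.1.le, h.le⟩ hrIoc.1
      rw [hv₁] at this
      exact ⟨(H.hm hrI).1, by linarith [hw0.1]⟩
  have hstay : ∀ j : ℕ, 1 ≤ j → f^[j] r = f r := by
    intro j hj
    induction j with
    | zero => omega
    | succ j ih =>
      rcases Nat.lt_or_ge j 1 with h' | h'
      · interval_cases j; simp
      · rw [Function.iterate_succ_apply', ih h', hfid _ hfrw]
  have hstep := hstay m hm
  rw [hmr] at hstep
  have hra : a ≤ v₁ := hv₁mem.1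
  have h1 : v₁ < f r := hstep ▸ hrIoc.1
  linarith [hfrw.2, hw0.2, hra]

lemma not_sens_of_fix {w : ℝ} (hw0 : w ∈ Set.Ioo 0 a) (hw : f w = w) {δ : ℝ} (hδ : 0 < δ) :
    ¬ (∀ x ∈ Set.Icc (0:ℝ) 1, ∀ V : Set ℝ, IsOpen V → x ∈ V →
        ∃ y ∈ V ∩ Set.Icc (0:ℝ) 1, ∃ n : ℕ, 0 < n ∧ δ ≤ |f^[n] x - f^[n] y|) := by
  intro hsens
  have hw1 : w < 1 := hw0.2.trans H.ha1
  have hmapw := H.mapsTo_fixed_interval hw0 hw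
  have hsubw : Set.Icc 0 w ⊆ Set.Icc (0:ℝ) 1 := Set.Icc_subset_Icc le_rfl hw1.le
  have hsmw : StrictMonoOn f (Set.Icc 0 w) :=
    H.hmono.mono (Set.Icc_subset_Icc le_rfl hw0.2.le)
  obtain ⟨z, ε, hε, hsub, hbound⟩ :=
    core (h := f) hw0.1 (H.hf.mono hsubw) hmapw hsmw (η := δ/2) (by linarith)
  have hzIoo : z ∈ Set.Ioo 0 w := hsub ⟨by linarith, by linarith⟩
  have hzI : z ∈ Set.Icc (0:ℝ) 1 := ⟨hzIoo.1.le, (hzIoo.2.trans hw1).le⟩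
  obtain ⟨y, ⟨hyV, hyI⟩, n, hn, hδn⟩ :=
    hsens z hzI (Metric.ball z ε) Metric.isOpen_ball (Metric.mem_ball_self hε)
  have hyIcc : y ∈ Set.Icc (z-ε) (z+ε) := by
    rw [Metric.mem_ball, Real.dist_eq, abs_sub_lt_iff] at hyV
    constructor <;> linarith [hyV.1, hyV.2]
  have := hbound y hyIcc n
  linarith [hδn, this]

omit H in
lemma id_of_dense_fixed {g : ℝ → ℝ} {p q : ℝ} (hpq : p < q)
    (hcont : ContinuousOn g (Set.Icc p q)) (hp : g p = p) (hq : g q = q)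
    (hdfix : ∀ t ∈ Set.Ioo p q, ∀ ρ, 0 < ρ → ∃ r ∈ Set.Icc p q, g r = r ∧ |r - t| < ρ) :
    ∀ t ∈ Set.Icc p q, g t = t := by
  intro t ht
  rcases eq_or_lt_of_le ht.1 with h1 | h1
  · rw [← h1, hp]
  rcases eq_or_lt_of_le ht.2 with h2 | h2
  · rw [h2, hq]
  by_contra hne
  set η := |g t - t| with hηdef
  have hη : 0 < η := abs_pos.2 (sub_ne_zero.2 hne)
  obtain ⟨ρ, hρ, hρball⟩ := Metric.continuousWithinAt_iff.1 (hcont t ht) (η/2) (by linarith)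
  set ρ' := min ρ (η/2) with hρ'def
  have hρ'pos : 0 < ρ' := lt_min hρ (by linarith)
  obtain ⟨r, hrIcc, hrfix, hrdist⟩ := hdfix t ⟨h1, h2⟩ ρ' hρ'pos
  have hfr : dist (g r) (g t) < η/2 := by
    apply hρball hrIcc
    rw [Real.dist_eq]
    exact lt_of_lt_of_le hrdist (min_le_left _ _)
  rw [Real.dist_eq] at hfr
  have : |g t - t| < η := by
    calc |g t - t| ≤ |g t - g r| + |g r - t| := abs_sub_le _ _ _
      _ = |g t - g r| + |r - t| := by rw [hrfix]
      _ < η/2 + ρ' := by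
          have h3 : |g t - g r| < η/2 := by rwa [abs_sub_comm] at hfr
          linarith
      _ ≤ η := by linarith [min_le_right ρ (η/2)]
  exact absurd this (lt_irrefl η)

lemma avoid_sides {α β : ℝ} (hab : α < β) (hsub : Set.Icc α β ⊆ Set.Icc 0 1)
    (havoid : ∀ n : ℕ, ∀ y ∈ Set.Icc α β, f^[n] y ≠ a) :
    ∀ i : ℕ, f^[i] '' Set.Icc α β ⊆ Set.Icc 0 a ∨ f^[i] '' Set.Icc α β ⊆ Set.Icc a 1 := by
  intro i
  have hanot : a ∉ f^[i] '' Set.Icc α β := by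
    rintro ⟨y, hy, hya⟩
    exact havoid i y hy hya
  have hconn : IsPreconnected (f^[i] '' Set.Icc α β) :=
    (isPreconnected_Icc).image _ ((H.iter_contOn i).mono hsub)
  have hsubI : f^[i] '' Set.Icc α β ⊆ Set.Icc 0 1 := by
    rintro _ ⟨y, hy, rfl⟩
    exact H.iter_mapsTo i (hsub hy)
  rcases side_of_avoid hconn hanot with hs | hs
  · exact Or.inl (fun x hx => ⟨(hsubI hx).1, (hs hx).le⟩)
  · exact Or.inr (fun x hx => ⟨(hs hx).le, (hsubI hx).2⟩)

lemma no_dense_per_of_avoid {α β : ℝ} (hab : α < β) (hsub : Set.Icc α β ⊆ Set.Icc 0 1)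
    (havoid : ∀ n : ℕ, ∀ y ∈ Set.Icc α β, f^[n] y ≠ a) :
    ¬ (Set.Icc (0:ℝ) 1 ⊆ closure {p : ℝ | p ∈ Set.Icc (0:ℝ) 1 ∧ PerPt f p}) := by
  intro hdense
  have hper : ∀ z ρ, 0 < ρ → z ∈ Set.Icc (0:ℝ) 1 →
      ∃ r, (r ∈ Set.Icc (0:ℝ) 1 ∧ PerPt f r) ∧ |r - z| < ρ := by
    intro z ρ hρ hz
    obtain ⟨r, hr, hrd⟩ := Metric.mem_closure_iff.1 (hdense hz) ρ hρ
    exact ⟨r, hr, by rwa [Real.dist_eq, abs_sub_comm] at hrd⟩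
  -- two periodic points p < q inside Ioo α β
  obtain ⟨p, ⟨hpI, hpPer⟩, hpd⟩ := hper (α + (β-α)/4) ((β-α)/4) (by linarith)
    (hsub ⟨by linarith [(hsub (Set.left_mem_Icc.2 hab.le)).1], by linarith [(hsub (Set.right_mem_Icc.2 hab.le)).2]⟩)
  obtain ⟨q, ⟨hqI, hqPer⟩, hqd⟩ := hper (β - (β-α)/4) ((β-α)/4) (by linarith)
    (hsub ⟨by linarith [(hsub (Set.left_mem_Icc.2 hab.le)).1], by linarith [(hsub (Set.right_mem_Icc.2 hab.le)).2]⟩)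
  rw [abs_sub_lt_iff] at hpd hqd
  have hpIoo : p ∈ Set.Ioo α β := ⟨by linarith [hpd.2], by linarith [hpd.1]⟩
  have hqIoo : q ∈ Set.Ioo α β := ⟨by linarith [hqd.2], by linarith [hqd.1]⟩
  have hpq : p < q := by linarith [hpd.1, hqd.2]
  obtain ⟨mp, hmp, hmpfix⟩ := hpPer
  obtain ⟨mq, hmq, hmqfix⟩ := hqPer
  set N := mp * mq with hNdef
  have hN : 0 < N := Nat.mul_pos hmp hmq
  set g := f^[N] with hgdef
  have hgp : g p = p := by
    rw [hgdef, hNdef, Function.iterate_mul]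
    exact Function.iterate_fixed hmpfix mq
  have hgq : g q = q := by
    rw [hgdef, hNdef, Nat.mul_comm, Function.iterate_mul]
    exact Function.iterate_fixed hmqfix mp
  have hsm : StrictMonoOn g (Set.Icc α β) := by
    rcases H.iter_mono_or_anti hsub (H.avoid_sides hab hsub havoid) N with h | h
    · exact h
    · exfalso
      have := h (Set.mem_Icc_of_Ioo hpIoo) (Set.mem_Icc_of_Ioo hqIoo) hpq
      rw [← hgdef] at this
      rw [hgp, hgq] at this
      exact absurd hpq (not_lt.2 this.le)
  have hpq' : Set.Icc p q ⊆ Set.Icc α β := Set.Icc_subset_Icc hpIoo.1.le hqIoo.2.le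
  have hmapg : Set.MapsTo g (Set.Icc p q) (Set.Icc p q) := by
    intro t ht
    constructor
    · have := hsm.monotoneOn (hpq' (Set.left_mem_Icc.2 hpq.le)) (hpq' ht) ht.1
      rwa [hgp] at this
    · have := hsm.monotoneOn (hpq' ht) (hpq' (Set.right_mem_Icc.2 hpq.le)) ht.2
      rwa [hgq] at this
  have hsmg : StrictMonoOn g (Set.Icc p q) := hsm.mono hpq'
  have hfixper : ∀ r ∈ Set.Icc p q, PerPt f r → g r = r := by
    rintro r hr ⟨mr, hmr, hmrfix⟩
    have hgm : g^[mr] r = r := by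
      rw [hgdef, ← Function.iterate_mul, Nat.mul_comm, Function.iterate_mul]
      exact Function.iterate_fixed hmrfix N
    exact periodic_fixed_of_invariant hsmg hmapg hr hmr hgm
  have hgid : ∀ t ∈ Set.Icc p q, g t = t := by
    apply id_of_dense_fixed hpq ((H.iter_contOn N).mono (hpq'.trans hsub)) hgp hgq
    intro t ht ρ hρ
    set ρ' := min ρ (min (t - p) (q - t)) with hρ'def
    have hρ'pos : 0 < ρ' := lt_min hρ (lt_min (by linarith [ht.1]) (by linarith [ht.2]))
    obtain ⟨r, ⟨hrI, hrPer⟩, hrd⟩ := hper t ρ' hρ'pos (hsub (hpq' (Set.mem_Icc_of_Ioo ht)))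
    rw [abs_sub_lt_iff] at hrd
    have h1 : ρ' ≤ t - p := le_trans (min_le_right _ _) (min_le_left _ _)
    have h2 : ρ' ≤ q - t := le_trans (min_le_right _ _) (min_le_right _ _)
    have hrmem : r ∈ Set.Icc p q := ⟨by linarith [hrd.2], by linarith [hrd.1]⟩
    refine ⟨r, hrmem, hfixper r hrmem hrPer, ?_⟩
    rw [abs_sub_lt_iff]
    exact ⟨lt_of_lt_of_le hrd.1 (min_le_left _ _), lt_of_lt_of_le hrd.2 (min_le_left _ _)⟩
  -- the cycle of intervals
  set Q : ℕ → Set ℝ := fun i => f^[i] '' Set.Icc p q with hQdef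
  have hQ0 : Q 0 = Set.Icc p q := by simp [hQdef]
  have hQN : Q N = Set.Icc p q := by
    have : f^[N] '' Set.Icc p q = id '' Set.Icc p q := Set.image_congr hgid
    rw [hQdef]
    simpa using this
  have hQsucc : ∀ i, f '' Q i = Q (i+1) := by
    intro i
    rw [hQdef, ← Set.image_comp, ← Function.iterate_succ']
  set U : Set ℝ := ⋃ i ∈ Set.Iio N, Q i with hUdef
  have hQU : ∀ i, i < N → Q i ⊆ U := by
    intro i hi x hx
    exact Set.mem_biUnion hi hx
  have hfU : f '' U = U := by
    apply Set.Subset.antisymm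
    · rintro _ ⟨x, hx, rfl⟩
      obtain ⟨i, hi, hxi⟩ := Set.mem_iUnion₂.1 hx
      have hfx : f x ∈ Q (i+1) := by
        rw [← hQsucc i]; exact Set.mem_image_of_mem f hxi
      rcases Nat.lt_or_ge (i+1) N with h | h
      · exact hQU _ h hfx
      · have : i + 1 = N := le_antisymm (Nat.succ_le_of_lt hi) h
        rw [this] at hfx
        rw [hQN, ← hQ0] at hfx
        exact hQU 0 hN hfx
    · intro x hx
      obtain ⟨i, hi, hxi⟩ := Set.mem_iUnion₂.1 hx
      simp only [Set.mem_Iio] at hi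
      rcases Nat.eq_zero_or_pos i with h | h
      · subst h
        rw [hQ0, ← hQN] at hxi
        have hN1 : N = (N-1) + 1 := (Nat.succ_pred_eq_of_pos hN).symm
        rw [hN1, ← hQsucc (N-1)] at hxi
        obtain ⟨y, hy, rfl⟩ := hxi
        exact Set.mem_image_of_mem f (hQU _ (by omega) hy)
      · obtain ⟨i', rfl⟩ : ∃ i', i = i' + 1 := ⟨i - 1, by omega⟩
        rw [← hQsucc i'] at hxi
        obtain ⟨y, hy, rfl⟩ := hxi
        exact Set.mem_image_of_mem f (hQU _ (by omega) hy)
  have hfUiter : ∀ j : ℕ, f^[j] '' U = U := by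
    intro j
    induction j with
    | zero => simp
    | succ j ih => rw [Function.iterate_succ', Set.image_comp, ih, hfU]
  have hNid : ∀ x ∈ U, f^[N] x = x := by
    intro x hx
    obtain ⟨i, hi, hxi⟩ := Set.mem_iUnion₂.1 hx
    obtain ⟨w, hw, rfl⟩ := hxi
    have hfix : f^[N] w = w := hgid w hw
    rw [← Function.iterate_add_apply, Nat.add_comm, Function.iterate_add_apply, hfix]
  have hinj : ∀ x ∈ U, ∀ y ∈ U, f x = f y → x = y := by
    intro x hx y hy hxy
    have hsplit : ∀ zz : ℝ, f^[N] zz = f^[N-1] (f zz) := by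
      intro zz
      conv_lhs => rw [show N = (N-1)+1 by omega]
      rw [Function.iterate_succ_apply]
    have hx' : x = f^[N-1] (f x) := by rw [← hsplit, hNid x hx]
    have hy' : y = f^[N-1] (f y) := by rw [← hsplit, hNid y hy]
    rw [hx', hy', hxy]
  have hUclosed : IsClosed U :=
    (Set.finite_Iio N).isClosed_biUnion (fun i _ =>
      ((isCompact_Icc).image_of_continuousOn ((H.iter_contOn i).mono (hpq'.trans hsub))).isClosed)
  -- midpoint and preimages
  set v₀ := (p + q)/2 with hv₀def
  have hp0 : 0 ≤ p := (hsub (hpq' (Set.left_mem_Icc.2 hpq.le))).1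
  have hq1 : q ≤ 1 := (hsub (hpq' (Set.right_mem_Icc.2 hpq.le))).2
  have hv₀Ioo : v₀ ∈ Set.Ioo p q := by constructor <;> (simp only [hv₀def]; linarith)
  have hv₀I : v₀ ∈ Set.Icc (0:ℝ) 1 := ⟨by linarith [hv₀Ioo.1], by linarith [hv₀Ioo.2]⟩
  have hv₀1 : v₀ < 1 := lt_of_lt_of_le hv₀Ioo.2 hq1
  obtain ⟨xL, hxLmem, hxL⟩ := intermediate_value_Icc H.ha0.le (H.hf.mono H.hsubL)
    (by rw [H.h0, H.hfa]; exact ⟨hv₀I.1, hv₀I.2⟩ : v₀ ∈ Set.Icc (f 0) (f a))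
  obtain ⟨xR, hxRmem, hxR⟩ := intermediate_value_Icc' H.ha1.le (H.hf.mono H.hsubR)
    (by rw [H.h1, H.hfa]; exact ⟨hv₀I.1, hv₀I.2⟩ : v₀ ∈ Set.Icc (f 1) (f a))
  have hLR : xL ≠ xR := by
    intro h
    have : xL = a := le_antisymm hxLmem.2 (h ▸ hxRmem.1)
    rw [this, H.hfa] at hxL
    linarith
  obtain ⟨x', hx'I, hx'v, hx'U⟩ : ∃ x', x' ∈ Set.Icc (0:ℝ) 1 ∧ f x' = v₀ ∧ x' ∉ U := by
    by_cases hL : xL ∈ U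
    · refine ⟨xR, H.hsubR hxRmem, hxR, fun hR => ?_⟩
      exact hLR (hinj xL hL xR hR (by rw [hxL, hxR]))
    · exact ⟨xL, H.hsubL hxLmem, hxL, hL⟩
  obtain ⟨ε₂, hε₂, hball⟩ := Metric.isOpen_iff.1 hUclosed.isOpen_compl x' hx'U
  obtain ⟨ρ₃, hρ₃, hρball⟩ := Metric.continuousWithinAt_iff.1 (H.hf x' hx'I) ((q-p)/2) (by linarith)
  obtain ⟨r, ⟨hrI, hrPer⟩, hrd⟩ := hper x' (min ε₂ ρ₃) (lt_min hε₂ hρ₃) hx'I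
  have hrU : r ∉ U := by
    have : r ∈ Metric.ball x' ε₂ := by
      rw [Metric.mem_ball, Real.dist_eq]
      exact lt_of_lt_of_le hrd (min_le_left _ _)
    exact hball this
  have hfrU : f r ∈ U := by
    have hd : dist (f r) (f x') < (q-p)/2 := by
      apply hρball hrI
      rw [Real.dist_eq]
      exact lt_of_lt_of_le hrd (min_le_right _ _)
    rw [hx'v, Real.dist_eq, abs_sub_lt_iff] at hd
    have hfrm : f r ∈ Set.Icc p q := by
      have hd1 := hd.1
      have hd2 := hd.2
      simp only [hv₀def] at hd1 hd2
      exact ⟨by linarith, by linarith⟩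
    apply hQU 0 hN
    rw [hQ0]
    exact hfrm
  obtain ⟨m, hm, hmfix⟩ := hrPer
  have : r ∈ U := by
    have h1 : f^[m] r = f^[m-1] (f r) := by
      conv_lhs => rw [show m = (m-1)+1 by omega]
      rw [Function.iterate_succ_apply]
    have h2 : f^[m-1] (f r) ∈ f^[m-1] '' U := Set.mem_image_of_mem _ hfrU
    rw [hfUiter (m-1)] at h2
    rw [← hmfix, h1]
    exact h2
  exact hrU this

lemma not_sens_of_avoid {α β : ℝ} (hab : α < β) (hsub : Set.Icc α β ⊆ Set.Icc 0 1)
    (havoid : ∀ n : ℕ, ∀ y ∈ Set.Icc α β, f^[n] y ≠ a) {δ : ℝ} (hδ : 0 < δ) :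
    ¬ (∀ x ∈ Set.Icc (0:ℝ) 1, ∀ V : Set ℝ, IsOpen V → x ∈ V →
        ∃ y ∈ V ∩ Set.Icc (0:ℝ) 1, ∃ n : ℕ, 0 < n ∧ δ ≤ |f^[n] x - f^[n] y|) := by
  intro hsens
  by_cases hdisj : ∀ n m : ℕ, n < m → f^[n] '' Set.Icc α β ∩ f^[m] '' Set.Icc α β = ∅
  · -- wandering case: lengths tend to 0
    have hstruct := fun n => H.img_struct n hab hsub
    choose u v hlt hsubI heq using hstruct
    have hpd : Pairwise (Disjoint on fun n => Set.Icc (u n) (v n)) := by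
      intro n m hnm
      simp only [Function.onFun]
      rw [Set.disjoint_iff_inter_eq_empty]
      rcases lt_or_gt_of_ne hnm with h | h
      · rw [← heq n, ← heq m]; exact hdisj n m h
      · rw [← heq n, ← heq m, Set.inter_comm]; exact hdisj m n h
    have hmeasU : MeasureTheory.volume (⋃ n, Set.Icc (u n) (v n)) =
        ∑' n, MeasureTheory.volume (Set.Icc (u n) (v n)) :=
      MeasureTheory.measure_iUnion hpd (fun n => measurableSet_Icc)
    have hbnd : ∑' n, MeasureTheory.volume (Set.Icc (u n) (v n)) ≤
        MeasureTheory.volume (Set.Icc (0:ℝ) 1) := by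
      rw [← hmeasU]
      exact MeasureTheory.measure_mono (Set.iUnion_subset hsubI)
    have hne : ∑' n, MeasureTheory.volume (Set.Icc (u n) (v n)) ≠ ⊤ := by
      refine ne_top_of_le_ne_top ?_ hbnd
      rw [Real.volume_Icc]
      exact ENNReal.ofReal_ne_top
    have hten := ENNReal.tendsto_atTop_zero_of_tsum_ne_top hne
    have htenR : Filter.Tendsto (fun n => v n - u n) Filter.atTop (nhds 0) := by
      have h1 := (ENNReal.tendsto_toReal ENNReal.zero_ne_top).comp hten
      simp only [ENNReal.toReal_zero] at h1
      apply h1.congr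
      intro n
      simp only [Function.comp_apply, Real.volume_Icc]
      exact ENNReal.toReal_ofReal (by linarith [hlt n])
    obtain ⟨N, hN⟩ := (Metric.tendsto_atTop.1 htenR) δ hδ
    obtain ⟨ε₁, hε₁, hunif⟩ := fin_unif isCompact_Icc N (fun i => f^[i])
      (fun i _ => H.iter_contOn i) (half_pos hδ)
    set z := (α + β)/2 with hzdef
    have hzIoo : z ∈ Set.Ioo α β := by constructor <;> (simp only [hzdef]; linarith)
    have hzI : z ∈ Set.Icc (0:ℝ) 1 := hsub (Set.mem_Icc_of_Ioo hzIoo)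
    set ε := min ε₁ ((β - α)/2) with hεdef
    have hε : 0 < ε := lt_min hε₁ (by linarith)
    obtain ⟨y, ⟨hyV, hyI⟩, n, hn, hδn⟩ :=
      hsens z hzI (Metric.ball z ε) Metric.isOpen_ball (Metric.mem_ball_self hε)
    rw [Metric.mem_ball, Real.dist_eq, abs_sub_lt_iff] at hyV
    have hyJ : y ∈ Set.Icc α β := by
      have h1 : ε ≤ (β - α)/2 := min_le_right _ _
      constructor <;> (simp only [hzdef] at hyV; linarith [hyV.1, hyV.2])
    have hzJ : z ∈ Set.Icc α β := Set.mem_Icc_of_Ioo hzIoo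
    rcases Nat.lt_or_ge n N with h | h
    · have := hunif z hzI y hyI (by
        rw [abs_sub_le_iff]
        constructor <;> linarith [hyV.1, hyV.2, min_le_left ε₁ ((β - α)/2)]) n h
      linarith
    · have hzn : f^[n] z ∈ Set.Icc (u n) (v n) := by
        rw [← heq n]; exact Set.mem_image_of_mem _ hzJ
      have hyn : f^[n] y ∈ Set.Icc (u n) (v n) := by
        rw [← heq n]; exact Set.mem_image_of_mem _ hyJ
      have hlen := hN n h
      rw [Real.dist_eq, sub_zero] at hlen
      have hlen' : v n - u n < δ := lt_of_abs_lt hlen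
      have : |f^[n] z - f^[n] y| ≤ v n - u n := by
        rw [abs_sub_le_iff]
        constructor <;> linarith [hzn.1, hzn.2, hyn.1, hyn.2]
      linarith
  · -- non-wandering case: invariant interval, monotone dynamics
    push_neg at hdisj
    obtain ⟨n, m, hnm, hmeet0⟩ := hdisj
    obtain ⟨u, v, huv, hLsubI, hLeq⟩ := H.img_struct n hab hsub
    set k := m - n with hkdef
    have hk : 1 ≤ k := by omega
    have havoidL : ∀ i : ℕ, ∀ y ∈ Set.Icc u v, f^[i] y ≠ a := by
      intro i y hy
      rw [← hLeq] at hy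
      obtain ⟨w, hw, rfl⟩ := hy
      rw [← Function.iterate_add_apply]
      exact havoid _ w hw
    have hkn : k + n = m := by rw [hkdef]; omega
    have hLk : f^[k] '' Set.Icc u v = f^[m] '' Set.Icc α β := by
      rw [← hLeq, ← Set.image_comp, ← Function.iterate_add, hkn]
    have hmeetL : (f^[k] '' Set.Icc u v ∩ Set.Icc u v).Nonempty := by
      rw [hLk, ← hLeq]
      rw [Set.inter_comm]
      exact hmeet0
    obtain ⟨u', v', hu'v', hsubI', hLsub', hmap', hsides⟩ :=
      H.Mbar huv hLsubI havoidL hmeetL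
    have hk2 : 0 < 2*k := by omega
    have h2keq : ∀ t : ℝ, f^[2*k] t = f^[k] (f^[k] t) := by
      intro t; rw [two_mul, Function.iterate_add_apply]
    have hmap2 : Set.MapsTo (f^[2*k]) (Set.Icc u' v') (Set.Icc u' v') := by
      intro t ht; rw [h2keq]; exact hmap' (hmap' ht)
    have hsm2 : StrictMonoOn (f^[2*k]) (Set.Icc u' v') := by
      rcases H.iter_mono_or_anti hsubI' hsides k with hmn | hmn
      · intro x hx y hy hxy
        rw [h2keq, h2keq]
        exact hmn (hmap' hx) (hmap' hy) (hmn hx hy hxy)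
      · intro x hx y hy hxy
        rw [h2keq, h2keq]
        exact hmn (hmap' hy) (hmap' hx) (hmn hx hy hxy)
    obtain ⟨ε₁, hε₁, hunif⟩ := fin_unif isCompact_Icc (2*k) (fun i => f^[i])
      (fun i _ => H.iter_contOn i) (half_pos hδ)
    obtain ⟨z, ε, hε, hsubIoo, hbound⟩ :=
      core hu'v' ((H.iter_contOn (2*k)).mono hsubI') hmap2 hsm2 hε₁
    have hzIoo : z ∈ Set.Ioo u' v' := hsubIoo ⟨by linarith, by linarith⟩
    have hzI : z ∈ Set.Icc (0:ℝ) 1 := hsubI' (Set.mem_Icc_of_Ioo hzIoo)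
    obtain ⟨y, ⟨hyV, hyI⟩, n', hn', hδn⟩ :=
      hsens z hzI (Metric.ball z ε) Metric.isOpen_ball (Metric.mem_ball_self hε)
    rw [Metric.mem_ball, Real.dist_eq, abs_sub_lt_iff] at hyV
    have hyIcc : y ∈ Set.Icc (z-ε) (z+ε) := ⟨by linarith [hyV.2], by linarith [hyV.1]⟩
    have hyM : y ∈ Set.Icc u' v' := Set.mem_Icc_of_Ioo (hsubIoo hyIcc)
    have hzM : z ∈ Set.Icc u' v' := Set.mem_Icc_of_Ioo hzIoo
    set i := n' % (2*k) with hidef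
    set j := n' / (2*k) with hjdef
    have hdecomp : ∀ t : ℝ, f^[n'] t = f^[i] ((f^[2*k])^[j] t) := by
      intro t
      rw [← Function.iterate_mul, ← Function.iterate_add_apply]
      congr 1
      rw [hidef, hjdef]
      exact (Nat.mod_add_div n' (2*k)).symm
    have hA : (f^[2*k])^[j] z ∈ Set.Icc u' v' := hmap2.iterate j hzM
    have hB : (f^[2*k])^[j] y ∈ Set.Icc u' v' := hmap2.iterate j hyM
    have hAB : |(f^[2*k])^[j] z - (f^[2*k])^[j] y| ≤ ε₁ := hbound y hyIcc j
    have hfinal := hunif _ (hsubI' hA) _ (hsubI' hB) hAB i (Nat.mod_lt n' hk2)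
    rw [← hdecomp z, ← hdecomp y] at hfinal
    linarith

omit H in
lemma mem_closure_diff_finite {z : ℝ} (hz : z ∈ Set.Icc (0:ℝ) 1) {F : Set ℝ} (hF : F.Finite) :
    z ∈ closure (Set.Icc (0:ℝ) 1 \ F) := by
  rw [Metric.mem_closure_iff]
  intro ε hε
  set c := max 0 (z - ε/2) with hcdef
  set d := min 1 (z + ε/2) with hddef
  have hcd : c < d := by
    rw [hcdef, hddef]
    apply max_lt
    · apply lt_min one_pos (by linarith [hz.1])
    · apply lt_min (by linarith [hz.2]) (by linarith)
  obtain ⟨y, hy⟩ := ((Set.Icc_infinite hcd).diff hF).nonempty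
  refine ⟨y, ⟨⟨le_trans (le_max_left _ _) hy.1.1, le_trans hy.1.2 (min_le_left _ _)⟩, hy.2⟩, ?_⟩
  rw [Real.dist_eq, abs_sub_lt_iff]
  have h1 : z - ε/2 ≤ c := le_max_right _ _
  have h2 : d ≤ z + ε/2 := min_le_right _ _
  constructor <;> linarith [hy.1.1, hy.1.2]

omit H in
lemma tail_dense {x : ℝ} (hdense : Set.Icc (0:ℝ) 1 ⊆ closure {y : ℝ | ∃ n : ℕ, f^[n] x = y})
    (t : ℕ) : Set.Icc (0:ℝ) 1 ⊆ closure {y : ℝ | ∃ n : ℕ, f^[n + t] x = y} := by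
  set A : Set ℝ := (fun n : ℕ => f^[n] x) '' Set.Iio t with hAdef
  have hAfin : A.Finite := (Set.finite_Iio t).image _
  set B : Set ℝ := {y : ℝ | ∃ n : ℕ, f^[n + t] x = y} with hBdef
  have horb : {y : ℝ | ∃ n : ℕ, f^[n] x = y} ⊆ A ∪ B := by
    rintro _ ⟨n, rfl⟩
    rcases Nat.lt_or_ge n t with h | h
    · exact Or.inl ⟨n, h, rfl⟩
    · exact Or.inr ⟨n - t, by rw [Nat.sub_add_cancel h]⟩
  have hIsub : Set.Icc (0:ℝ) 1 ⊆ A ∪ closure B := by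
    intro z hz
    have := hdense hz
    have h2 : closure ({y : ℝ | ∃ n : ℕ, f^[n] x = y}) ⊆ A ∪ closure B := by
      have : closure (A ∪ B) = closure A ∪ closure B := closure_union
      calc closure ({y : ℝ | ∃ n : ℕ, f^[n] x = y}) ⊆ closure (A ∪ B) := closure_mono horb
        _ = closure A ∪ closure B := closure_union
        _ = A ∪ closure B := by rw [hAfin.isClosed.closure_eq]
    exact h2 this
  intro z hz
  have hz2 : z ∈ closure (Set.Icc (0:ℝ) 1 \ A) := mem_closure_diff_finite hz hAfin
  have hsub2 : Set.Icc (0:ℝ) 1 \ A ⊆ closure B := by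
    intro w hw
    rcases hIsub hw.1 with h | h
    · exact absurd h hw.2
    · exact h
  have := closure_mono hsub2 hz2
  rwa [closure_closure] at this

omit H in
lemma orbit_visit {x α β : ℝ} (hdense : Set.Icc (0:ℝ) 1 ⊆ closure {y : ℝ | ∃ n : ℕ, f^[n] x = y})
    (hab : α < β) (hsub : Set.Icc α β ⊆ Set.Icc 0 1) : ∃ n : ℕ, f^[n] x ∈ Set.Ioo α β := by
  have hmid : (α + β)/2 ∈ Set.Icc (0:ℝ) 1 := hsub ⟨by linarith, by linarith⟩
  obtain ⟨y, ⟨n, rfl⟩, hd⟩ := Metric.mem_closure_iff.1 (hdense hmid) ((β - α)/2) (by linarith)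
  rw [Real.dist_eq, abs_sub_lt_iff] at hd
  exact ⟨n, by constructor <;> linarith [hd.1, hd.2]⟩

lemma no_dense_orbit_of_avoid {α β : ℝ} (hab : α < β) (hsub : Set.Icc α β ⊆ Set.Icc 0 1)
    (havoid : ∀ n : ℕ, ∀ y ∈ Set.Icc α β, f^[n] y ≠ a)
    (hgt : ∀ x ∈ Set.Ioo 0 a, x < f x) :
    ¬ ∃ x ∈ Set.Icc (0:ℝ) 1, Set.Icc (0:ℝ) 1 ⊆ closure {y : ℝ | ∃ n : ℕ, f^[n] x = y} := by
  rintro ⟨x, hxI, hdense⟩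
  by_cases hdisj : ∀ n m : ℕ, n < m → f^[n] '' Set.Icc α β ∩ f^[m] '' Set.Icc α β = ∅
  · -- wandering: two visits contradiction
    obtain ⟨n₁, hn₁⟩ := orbit_visit hdense hab hsub
    have htd := tail_dense (f := f) hdense (n₁ + 1)
    have hmid : (α + β)/2 ∈ Set.Icc (0:ℝ) 1 := hsub ⟨by linarith, by linarith⟩
    obtain ⟨y, ⟨n'', hyn⟩, hdy⟩ := Metric.mem_closure_iff.1 (htd hmid) ((β - α)/2) (by linarith)
    rw [← hyn, Real.dist_eq, abs_sub_lt_iff] at hdy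
    have hn'' : f^[n'' + (n₁ + 1)] x ∈ Set.Ioo α β := by constructor <;> linarith [hdy.1, hdy.2]
    set n₂ := n'' + (n₁ + 1) with hn₂def
    have hn₁₂ : n₁ < n₂ := by omega
    have hd := hdisj 0 (n₂ - n₁) (by omega)
    simp only [Function.iterate_zero, Set.image_id] at hd
    have hmem1 : f^[n₂] x ∈ Set.Icc α β := Set.mem_Icc_of_Ioo hn''
    have hmem2 : f^[n₂] x ∈ f^[n₂ - n₁] '' Set.Icc α β := by
      refine ⟨f^[n₁] x, Set.mem_Icc_of_Ioo hn₁, ?_⟩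
      rw [← Function.iterate_add_apply]
      congr 1
      omega
    rw [Set.eq_empty_iff_forall_notMem] at hd
    exact hd (f^[n₂] x) ⟨hmem1, hmem2⟩
  · -- non-wandering
    push_neg at hdisj
    obtain ⟨n, m, hnm, hmeet0⟩ := hdisj
    obtain ⟨u, v, huv, hLsubI, hLeq⟩ := H.img_struct n hab hsub
    set k := m - n with hkdef
    have hk : 1 ≤ k := by omega
    have hkn : k + n = m := by rw [hkdef]; omega
    have havoidL : ∀ i : ℕ, ∀ y ∈ Set.Icc u v, f^[i] y ≠ a := by
      intro i y hy
      rw [← hLeq] at hy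
      obtain ⟨w, hw, rfl⟩ := hy
      rw [← Function.iterate_add_apply]
      exact havoid _ w hw
    have hmeetL : (f^[k] '' Set.Icc u v ∩ Set.Icc u v).Nonempty := by
      have hLk : f^[k] '' Set.Icc u v = f^[m] '' Set.Icc α β := by
        rw [← hLeq, ← Set.image_comp, ← Function.iterate_add, hkn]
      rw [hLk, ← hLeq, Set.inter_comm]
      exact hmeet0
    obtain ⟨u', v', hu'v', hsubI', hLsub', hmap', hsides⟩ :=
      H.Mbar huv hLsubI havoidL hmeetL
    -- the orbit visits (u, v) ⊆ [u', v']
    obtain ⟨t₁, ht₁⟩ := orbit_visit hdense huv hLsubI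
    set z₁ := f^[t₁] x with hz₁def
    have hz₁M : z₁ ∈ Set.Icc u' v' := hLsub' (Set.mem_Icc_of_Ioo ht₁)
    set C : Set ℝ := ⋃ i ∈ Set.Iio k, f^[i] '' Set.Icc u' v' with hCdef
    have hCclosed : IsClosed C :=
      (Set.finite_Iio k).isClosed_biUnion (fun i _ =>
        ((isCompact_Icc).image_of_continuousOn ((H.iter_contOn i).mono hsubI')).isClosed)
    have htailC : ∀ p : ℕ, f^[p] z₁ ∈ C := by
      intro p
      have hdecomp : ∀ zz : ℝ, f^[p] zz = f^[p % k] ((f^[k])^[p / k] zz) := by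
        intro zz
        rw [← Function.iterate_mul, ← Function.iterate_add_apply]
        congr 1
        exact (Nat.mod_add_div p k).symm
      rw [hdecomp z₁]
      exact Set.mem_biUnion (Nat.mod_lt p (by omega) : p % k < k)
        (Set.mem_image_of_mem _ (hmap'.iterate (p / k) hz₁M))
    set Fset : Set ℝ := (fun n : ℕ => f^[n] x) '' Set.Iio t₁ with hFdef
    have hFfin : Fset.Finite := (Set.finite_Iio t₁).image _
    have horb : {y : ℝ | ∃ n : ℕ, f^[n] x = y} ⊆ Fset ∪ C := by
      rintro _ ⟨p, rfl⟩
      rcases Nat.lt_or_ge p t₁ with h | h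
      · exact Or.inl ⟨p, h, rfl⟩
      · right
        have : f^[p] x = f^[p - t₁] z₁ := by
          rw [hz₁def, ← Function.iterate_add_apply]
          congr 1
          omega
        rw [this]
        exact htailC (p - t₁)
    have hIsub : Set.Icc (0:ℝ) 1 ⊆ Fset ∪ C := fun z hz =>
      closure_minimal horb (hFfin.isClosed.union hCclosed) (hdense hz)
    -- a ∈ C
    have haC : a ∈ C := by
      have h1 : a ∈ closure (Set.Icc (0:ℝ) 1 \ Fset) :=
        mem_closure_diff_finite ⟨H.ha0.le, H.ha1.le⟩ hFfin
      have h2 : Set.Icc (0:ℝ) 1 \ Fset ⊆ C := by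
        intro w hw
        rcases hIsub hw.1 with h | h
        · exact absurd h hw.2
        · exact h
      have := closure_mono h2 h1
      rwa [hCclosed.closure_eq] at this
    obtain ⟨i₀, hi₀k, w₀, hw₀M, hw₀⟩ := Set.mem_iUnion₂.1 haC
    -- 1 ∈ image at i₀+1
    have h1P : (1:ℝ) ∈ f^[i₀+1] '' Set.Icc u' v' := by
      refine ⟨w₀, hw₀M, ?_⟩
      rw [Function.iterate_succ_apply', hw₀, H.hfa]
    obtain ⟨p₁, q₁, hp₁q₁, hPsubI, hPeq⟩ := H.img_struct (i₀+1) hu'v' hsubI'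
    have hq₁ : q₁ = 1 := by
      have h1m : (1:ℝ) ∈ Set.Icc p₁ q₁ := hPeq ▸ h1P
      have := (hPsubI (Set.right_mem_Icc.2 hp₁q₁.le)).2
      linarith [h1m.2]
    have hp₁a : a ≤ p₁ := by
      rcases hsides (i₀+1) with hs | hs
      · exfalso
        have := (hs h1P).2
        linarith [H.ha1]
      · have hmem : p₁ ∈ f^[i₀+1] '' Set.Icc u' v' := by
          rw [hPeq]; exact Set.left_mem_Icc.2 hp₁q₁.le
        exact (hs hmem).1
    have hp₁1 : p₁ < 1 := hq₁ ▸ hp₁q₁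
    -- image at i₀+2 is Icc 0 (f p₁)
    have himg2 : f^[i₀+2] '' Set.Icc u' v' = Set.Icc 0 (f p₁) := by
      have : f^[i₀+2] '' Set.Icc u' v' = f '' (f^[i₀+1] '' Set.Icc u' v') := by
        rw [← Set.image_comp, ← Function.iterate_succ']
      rw [this, hPeq, hq₁, H.img_anti hp₁a hp₁1.le le_rfl, H.h1]
    have hs₀pos : 0 < f p₁ := by
      have := H.hanti ⟨hp₁a, hp₁1.le⟩ ⟨H.ha1.le, le_rfl⟩ hp₁1
      rwa [H.h1] at this
    -- exclusion: an image of the form Icc 0 s with s ≤ a must have s < a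
    have hexcl : ∀ jj s, f^[jj] '' Set.Icc u' v' = Set.Icc 0 s → 0 < s → s < a := by
      intro jj s hjj hspos
      have hsa : s ≤ a := by
        rcases hsides jj with hs | hs
        · have : s ∈ Set.Icc 0 a := hs (hjj ▸ (Set.right_mem_Icc.2 hspos.le))
          exact this.2
        · exfalso
          have : (0:ℝ) ∈ Set.Icc a 1 := hs (hjj ▸ (Set.left_mem_Icc.2 hspos.le))
          linarith [this.1, H.ha0]
      rcases lt_or_eq_of_le hsa with h | h
      · exact h
      · exfalso
        have hnext : f^[jj+1] '' Set.Icc u' v' = Set.Icc 0 1 := by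
          have : f^[jj+1] '' Set.Icc u' v' = f '' (f^[jj] '' Set.Icc u' v') := by
            rw [← Set.image_comp, ← Function.iterate_succ']
          rw [this, hjj, h, H.full_left]
        rcases hsides (jj+1) with hs | hs
        · have : (1:ℝ) ∈ Set.Icc 0 a := hs (hnext ▸ (Set.right_mem_Icc.2 zero_le_one))
          linarith [this.2, H.ha1]
        · have : (0:ℝ) ∈ Set.Icc a 1 := hs (hnext ▸ (Set.left_mem_Icc.2 zero_le_one))
          linarith [this.1, H.ha0]
    -- inductive sequence
    have hseq : ∀ jj : ℕ, ∃ s, f^[i₀+2+jj] '' Set.Icc u' v' = Set.Icc 0 s ∧ 0 < s ∧ s < a := by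
      intro jj
      induction jj with
      | zero => exact ⟨f p₁, himg2, hs₀pos, hexcl (i₀+2) (f p₁) himg2 hs₀pos⟩
      | succ jj ih =>
        obtain ⟨s, hseq', hspos, hsa⟩ := ih
        have hnext : f^[i₀+2+(jj+1)] '' Set.Icc u' v' = Set.Icc 0 (f s) := by
          have heq1 : i₀+2+(jj+1) = (i₀+2+jj)+1 := by omega
          have : f^[(i₀+2+jj)+1] '' Set.Icc u' v' = f '' (f^[i₀+2+jj] '' Set.Icc u' v') := by
            rw [← Set.image_comp, ← Function.iterate_succ']
          rw [heq1, this, hseq', H.img_mono le_rfl hspos.le hsa.le, H.h0]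
        have hfspos : 0 < f s := lt_trans hspos (hgt s ⟨hspos, hsa⟩)
        exact ⟨f s, hnext, hfspos, hexcl _ _ hnext hfspos⟩
    choose S hSeq hSpos hSa using hseq
    have hSrec : ∀ jj : ℕ, S (jj+1) = f (S jj) := by
      intro jj
      have hnext : f^[i₀+2+(jj+1)] '' Set.Icc u' v' = Set.Icc 0 (f (S jj)) := by
        have heq1 : i₀+2+(jj+1) = (i₀+2+jj)+1 := by omega
        have : f^[(i₀+2+jj)+1] '' Set.Icc u' v' = f '' (f^[i₀+2+jj] '' Set.Icc u' v') := by
          rw [← Set.image_comp, ← Function.iterate_succ']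
        rw [heq1, this, hSeq jj, H.img_mono le_rfl (hSpos jj).le (hSa jj).le, H.h0]
      have h2 := hSeq (jj+1)
      rw [hnext] at h2
      have hfspos : 0 < f (S jj) := lt_trans (hSpos jj) (hgt (S jj) ⟨hSpos jj, hSa jj⟩)
      have ha1 : S (jj+1) ≤ f (S jj) := (h2 ▸ (Set.right_mem_Icc.2 (hSpos (jj+1)).le) : S (jj+1) ∈ Set.Icc 0 (f (S jj))).2
      have ha2 : f (S jj) ≤ S (jj+1) := (h2.symm ▸ (Set.right_mem_Icc.2 hfspos.le) : f (S jj) ∈ Set.Icc 0 (S (jj+1))).2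
      linarith
    have hSmono : Monotone S := by
      apply monotone_nat_of_le_succ
      intro jj
      rw [hSrec jj]
      exact (hgt (S jj) ⟨hSpos jj, hSa jj⟩).le
    obtain ⟨t, htIcc, htfix, htub, _⟩ := tendsto_fixed (w := f) (S := Set.Icc 0 a)
      (H.hf.mono H.hsubL) isClosed_Icc (fun j => ⟨(hSpos j).le, (hSa j).le⟩) hSrec hSmono
      ⟨a, by rintro _ ⟨j, rfl⟩; exact (hSa j).le⟩
    have htpos : 0 < t := lt_of_lt_of_le (hSpos 0) (htub 0)
    rcases lt_or_eq_of_le htIcc.2 with h | h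
    · exact absurd htfix (ne_of_lt (hgt t ⟨htpos, h⟩)).symm
    · rw [h, H.hfa] at htfix
      linarith [H.ha1]

lemma growth (hgt : ∀ x ∈ Set.Ioo 0 a, x < f x) :
    ∀ s : ℝ, 0 < s → s ≤ 1 → ∃ mm : ℕ, Set.Icc (0:ℝ) 1 ⊆ f^[mm] '' Set.Icc 0 s := by
  intro s hs hs1
  classical
  by_cases hsa : a ≤ s
  · refine ⟨1, ?_⟩
    rw [← H.full_left]
    simp only [Function.iterate_one]
    exact Set.image_mono (Set.Icc_subset_Icc le_rfl hsa)
  · push_neg at hsa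
    have hex : ∃ kk : ℕ, a ≤ f^[kk] s := by
      by_contra hnot
      push_neg at hnot
      have hmem : ∀ kk : ℕ, f^[kk] s ∈ Set.Ioo 0 a := by
        intro kk
        induction kk with
        | zero => exact ⟨hs, by simpa using hnot 0⟩
        | succ kk ih =>
          rw [Function.iterate_succ_apply']
          exact ⟨lt_trans ih.1 (hgt _ ih), by
            have := hnot (kk+1)
            rwa [Function.iterate_succ_apply'] at this⟩
      have hmn : Monotone (fun kk : ℕ => f^[kk] s) := by
        apply monotone_nat_of_le_succ
        intro kk
        rw [Function.iterate_succ_apply']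
        exact (hgt _ (hmem kk)).le
      obtain ⟨t, htIcc, htfix, htub, _⟩ := tendsto_fixed (w := f) (S := Set.Icc 0 a)
        (H.hf.mono H.hsubL) isClosed_Icc (fun kk => Set.mem_Icc_of_Ioo (hmem kk))
        (fun kk => Function.iterate_succ_apply' f kk s) hmn
        ⟨a, by rintro _ ⟨kk, rfl⟩; exact (hmem kk).2.le⟩
      have htpos : 0 < t := lt_of_lt_of_le (by simpa using (hmem 0).1 : 0 < f^[0] s) (htub 0)
      rcases lt_or_eq_of_le htIcc.2 with h | h
      · exact absurd htfix (ne_of_lt (hgt t ⟨htpos, h⟩)).symm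
      · rw [h, H.hfa] at htfix
        linarith [H.ha1]
    set k₀ := Nat.find hex with hk₀def
    have hk₀ : a ≤ f^[k₀] s := Nat.find_spec hex
    have hmin : ∀ j, j < k₀ → f^[j] s < a := by
      intro j hj
      have := Nat.find_min hex hj
      push_neg at this
      exact this
    have hchain : ∀ j : ℕ, j ≤ k₀ → 0 < f^[j] s ∧ f^[j] '' Set.Icc 0 s = Set.Icc 0 (f^[j] s) := by
      intro j
      induction j with
      | zero => intro _; exact ⟨hs, by simp⟩
      | succ j ih =>
        intro hj
        obtain ⟨hpos, heq⟩ := ih (by omega)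
        have hja : f^[j] s < a := hmin j (by omega)
        constructor
        · rw [Function.iterate_succ_apply']
          exact lt_trans hpos (hgt _ ⟨hpos, hja⟩)
        · have : f^[j+1] '' Set.Icc 0 s = f '' (f^[j] '' Set.Icc 0 s) := by
            rw [← Set.image_comp, ← Function.iterate_succ']
          rw [this, heq, H.img_mono le_rfl hpos.le hja.le, H.h0, Function.iterate_succ_apply']
    obtain ⟨_, heq⟩ := hchain k₀ le_rfl
    refine ⟨k₀ + 1, ?_⟩
    have himg : f^[k₀+1] '' Set.Icc 0 s = f '' (Set.Icc 0 (f^[k₀] s)) := by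
      have : f^[k₀+1] '' Set.Icc 0 s = f '' (f^[k₀] '' Set.Icc 0 s) := by
        rw [← Set.image_comp, ← Function.iterate_succ']
      rw [this, heq]
    rw [himg, ← H.full_left]
    exact Set.image_mono (Set.Icc_subset_Icc le_rfl hk₀)

lemma leo (hgt : ∀ x ∈ Set.Ioo 0 a, x < f x)
    (hcover : ∀ α β : ℝ, α < β → Set.Icc α β ⊆ Set.Icc 0 1 →
      ∃ (n₀ : ℕ) (y : ℝ), y ∈ Set.Icc α β ∧ f^[n₀] y = a) :
    ∀ α β : ℝ, α < β → Set.Icc α β ⊆ Set.Icc 0 1 →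
      ∃ n : ℕ, 1 ≤ n ∧ Set.Icc (0:ℝ) 1 ⊆ f^[n] '' Set.Icc α β := by
  intro α β hab hsub
  obtain ⟨n₀, y, hy, hya⟩ := hcover α β hab hsub
  have h1mem : (1:ℝ) ∈ f^[n₀+1] '' Set.Icc α β :=
    ⟨y, hy, by rw [Function.iterate_succ_apply', hya, H.hfa]⟩
  obtain ⟨p₁, q₁, hp₁q₁, hPsubI, hPeq⟩ := H.img_struct (n₀+1) hab hsub
  have hq₁ : q₁ = 1 := by
    have h1m : (1:ℝ) ∈ Set.Icc p₁ q₁ := hPeq ▸ h1mem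
    have := (hPsubI (Set.right_mem_Icc.2 hp₁q₁.le)).2
    linarith [h1m.2]
  have hp₁0 : 0 ≤ p₁ := (hPsubI (Set.left_mem_Icc.2 hp₁q₁.le)).1
  have hp₁1 : p₁ < 1 := hq₁ ▸ hp₁q₁
  have himg2 : f^[n₀+2] '' Set.Icc α β = f '' Set.Icc p₁ 1 := by
    have : f^[n₀+2] '' Set.Icc α β = f '' (f^[n₀+1] '' Set.Icc α β) := by
      rw [← Set.image_comp, ← Function.iterate_succ']
    rw [this, hPeq, hq₁]
  by_cases hpa : p₁ ≤ a
  · refine ⟨n₀+2, by omega, ?_⟩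
    rw [himg2, ← H.full_right]
    exact Set.image_mono (Set.Icc_subset_Icc hpa le_rfl)
  · push_neg at hpa
    have himg2' : f^[n₀+2] '' Set.Icc α β = Set.Icc 0 (f p₁) := by
      rw [himg2, H.img_anti hpa.le hp₁1.le le_rfl, H.h1]
    have hfp₁pos : 0 < f p₁ := by
      have := H.hanti ⟨hpa.le, hp₁1.le⟩ ⟨H.ha1.le, le_rfl⟩ hp₁1
      rwa [H.h1] at this
    have hfp₁1 : f p₁ ≤ 1 := (H.hm ⟨hp₁0, hp₁1.le⟩).2
    obtain ⟨mm, hmm⟩ := H.growth hgt (f p₁) hfp₁pos hfp₁1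
    refine ⟨mm + (n₀ + 2), by omega, ?_⟩
    have : f^[mm + (n₀+2)] '' Set.Icc α β = f^[mm] '' (f^[n₀+2] '' Set.Icc α β) := by
      rw [← Set.image_comp, ← Function.iterate_add]
    rw [this, himg2']
    exact hmm

omit H in
lemma near_interval {z ε : ℝ} (hz : z ∈ Set.Icc (0:ℝ) 1) (hε : 0 < ε) :
    ∃ c d : ℝ, c < d ∧ Set.Icc c d ⊆ Set.Icc (0:ℝ) 1 ∧ Set.Icc c d ⊆ Metric.ball z ε := by
  by_cases h : z < 1
  · set d := min 1 (z + ε/2) with hddef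
    have hzd : z < d := lt_min h (by linarith)
    refine ⟨(z + d)/2, d, by linarith, ?_, ?_⟩
    · intro t ht
      exact ⟨by linarith [ht.1, hz.1], le_trans ht.2 (min_le_left _ _)⟩
    · intro t ht
      rw [Metric.mem_ball, Real.dist_eq, abs_sub_lt_iff]
      have hd2 : d ≤ z + ε/2 := min_le_right _ _
      constructor <;> linarith [ht.1, ht.2]
  · have hz1 : z = 1 := le_antisymm hz.2 (not_lt.1 h)
    set c := max 0 (z - ε/2) with hcdef
    have hcz : c < z := by
      rw [hcdef]
      apply max_lt (by rw [hz1]; linarith) (by linarith)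
    refine ⟨c, (c + z)/2, by linarith, ?_, ?_⟩
    · intro t ht
      have hc0 : 0 ≤ c := le_max_left _ _
      exact ⟨le_trans hc0 ht.1, by rw [← hz1] at *; linarith [ht.2]⟩
    · intro t ht
      rw [Metric.mem_ball, Real.dist_eq, abs_sub_lt_iff]
      have hc2 : z - ε/2 ≤ c := le_max_right _ _
      constructor <;> linarith [ht.1, ht.2]

lemma dense_per_of_leo
    (hleo : ∀ α β : ℝ, α < β → Set.Icc α β ⊆ Set.Icc 0 1 →
      ∃ n : ℕ, 1 ≤ n ∧ Set.Icc (0:ℝ) 1 ⊆ f^[n] '' Set.Icc α β) :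
    Set.Icc (0:ℝ) 1 ⊆ closure {p : ℝ | p ∈ Set.Icc (0:ℝ) 1 ∧ PerPt f p} := by
  intro z hz
  rw [Metric.mem_closure_iff]
  intro ε hε
  obtain ⟨c, d, hcd, hsubI, hball⟩ := near_interval hz hε
  obtain ⟨n, hn, hcover⟩ := hleo c d hcd hsubI
  obtain ⟨y₁, hy₁, hy₁c⟩ := hcover (hsubI (Set.left_mem_Icc.2 hcd.le))
  obtain ⟨y₂, hy₂, hy₂d⟩ := hcover (hsubI (Set.right_mem_Icc.2 hcd.le))
  set φ : ℝ → ℝ := fun t => f^[n] t - t with hφdef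
  have huIcc : Set.uIcc y₁ y₂ ⊆ Set.Icc c d := Set.uIcc_subset_Icc hy₁ hy₂
  have hφc : ContinuousOn φ (Set.uIcc y₁ y₂) :=
    (((H.iter_contOn n).mono (huIcc.trans hsubI)).sub continuousOn_id)
  have h0m : (0:ℝ) ∈ Set.uIcc (φ y₁) (φ y₂) := by
    rw [Set.mem_uIcc]
    have h1 : φ y₁ ≤ 0 := by simp only [hφdef, hy₁c]; linarith [hy₁.1]
    have h2 : 0 ≤ φ y₂ := by simp only [hφdef, hy₂d]; linarith [hy₂.2]
    left; exact ⟨h1, h2⟩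
  obtain ⟨r, hr, hrφ⟩ := intermediate_value_uIcc hφc h0m
  have hrfix : f^[n] r = r := by simp only [hφdef] at hrφ; linarith [sub_eq_zero.1 hrφ]
  have hrIcc : r ∈ Set.Icc c d := huIcc hr
  refine ⟨r, ⟨hsubI hrIcc, n, hn, hrfix⟩, ?_⟩
  have := hball hrIcc
  rw [Metric.mem_ball, Real.dist_eq] at this
  rw [Real.dist_eq, abs_sub_comm]
  exact this

lemma sens_of_leo
    (hleo : ∀ α β : ℝ, α < β → Set.Icc α β ⊆ Set.Icc 0 1 →
      ∃ n : ℕ, 1 ≤ n ∧ Set.Icc (0:ℝ) 1 ⊆ f^[n] '' Set.Icc α β) :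
    ∀ x ∈ Set.Icc (0:ℝ) 1, ∀ V : Set ℝ, IsOpen V → x ∈ V →
      ∃ y ∈ V ∩ Set.Icc (0:ℝ) 1, ∃ n : ℕ, 0 < n ∧ (1:ℝ)/4 ≤ |f^[n] x - f^[n] y| := by
  intro x hx V hV hxV
  obtain ⟨ε, hε, hballV⟩ := Metric.isOpen_iff.1 hV x hxV
  obtain ⟨c, d, hcd, hsubI, hball⟩ := near_interval hx hε
  obtain ⟨n, hn, hcover⟩ := hleo c d hcd hsubI
  obtain ⟨y₀, hy₀, hy₀0⟩ := hcover (Set.left_mem_Icc.2 zero_le_one)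
  obtain ⟨y₁, hy₁, hy₁1⟩ := hcover (Set.right_mem_Icc.2 zero_le_one)
  have hfx : f^[n] x ∈ Set.Icc (0:ℝ) 1 := H.iter_mapsTo n hx
  by_cases hhalf : f^[n] x ≤ 1/2
  · refine ⟨y₁, ⟨hballV (hball hy₁), hsubI hy₁⟩, n, hn, ?_⟩
    rw [hy₁1, abs_of_nonpos (by linarith)]
    linarith
  · refine ⟨y₀, ⟨hballV (hball hy₀), hsubI hy₀⟩, n, hn, ?_⟩
    rw [hy₀0, sub_zero, abs_of_nonneg hfx.1]
    linarith

omit H in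
lemma band {g : ℝ → ℝ} {x₁ x₂ c d : ℝ} (hx : x₁ < x₂) (hcd : c < d)
    (hg : ContinuousOn g (Set.Icc x₁ x₂)) (h₁ : g x₁ = c) (h₂ : g x₂ = d) :
    ∃ u' v', u' < v' ∧ Set.Icc u' v' ⊆ Set.Icc x₁ x₂ ∧ g '' Set.Icc u' v' ⊆ Set.Icc c d := by
  set A : Set ℝ := Set.Icc x₁ x₂ ∩ g ⁻¹' {c} with hAdef
  have hAclosed : IsClosed A := hg.preimage_isClosed_of_isClosed isClosed_Icc isClosed_singleton
  have hAne : A.Nonempty := ⟨x₁, Set.left_mem_Icc.2 hx.le, by simp [h₁]⟩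
  have hAbdd : BddAbove A := (bddAbove_Icc (a := x₁) (b := x₂)).mono Set.inter_subset_left
  set u' := sSup A with hu'def
  have hu'mem : u' ∈ A := hAclosed.csSup_mem hAne hAbdd
  have hgu' : g u' = c := hu'mem.2
  have hu'x : u' ∈ Set.Icc x₁ x₂ := hu'mem.1
  have hu'x₂ : u' < x₂ := by
    rcases lt_or_eq_of_le hu'x.2 with h | h
    · exact h
    · exfalso; rw [h, h₂] at hgu'; linarith
  set B : Set ℝ := Set.Icc u' x₂ ∩ g ⁻¹' {d} with hBdef
  have hBclosed : IsClosed B :=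
    (hg.mono (Set.Icc_subset_Icc hu'x.1 le_rfl)).preimage_isClosed_of_isClosed
      isClosed_Icc isClosed_singleton
  have hBne : B.Nonempty := ⟨x₂, Set.right_mem_Icc.2 hu'x₂.le, by simp [h₂]⟩
  have hBbdd : BddBelow B := (bddBelow_Icc (a := x₂) (b := u')).mono Set.inter_subset_left
  set v' := sInf B with hv'def
  have hv'mem : v' ∈ B := hBclosed.csInf_mem hBne hBbdd
  have hgv' : g v' = d := hv'mem.2
  have hv'x : v' ∈ Set.Icc u' x₂ := hv'mem.1
  have hu'v' : u' < v' := by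
    rcases lt_or_eq_of_le hv'x.1 with h | h
    · exact h
    · exfalso; rw [← h, hgu'] at hgv'; linarith
  have hsub : Set.Icc u' v' ⊆ Set.Icc x₁ x₂ := Set.Icc_subset_Icc hu'x.1 hv'x.2
  refine ⟨u', v', hu'v', hsub, ?_⟩
  rintro _ ⟨s, hs, rfl⟩
  by_contra hout
  simp only [Set.mem_Icc, not_and_or, not_le] at hout
  rcases hout with h | h
  · -- g s < c
    have hsu' : u' < s := by
      rcases lt_or_eq_of_le hs.1 with h' | h'
      · exact h'
      · exfalso; rw [← h', hgu'] at h; linarith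
    have h0m : c ∈ Set.Icc (g s) (g v') := by rw [hgv']; exact ⟨h.le, hcd.le⟩
    obtain ⟨s', hs', hgs'⟩ := intermediate_value_Icc hs.2
      (hg.mono (Set.Icc_subset_Icc (hu'x.1.trans hs.1) hv'x.2)) h0m
    have : s' ∈ A := ⟨⟨hu'x.1.trans (hs.1.trans hs'.1), hs'.2.trans hv'x.2⟩, by simp [hgs']⟩
    have := le_csSup hAbdd this
    have : s' ≤ u' := this
    linarith [hs'.1, hsu']
  · -- g s > d
    have hsv' : s < v' := by
      rcases lt_or_eq_of_le hs.2 with h' | h'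
      · exact h'
      · exfalso; rw [h', hgv'] at h; linarith
    have h0m : d ∈ Set.Icc (g u') (g s) := by rw [hgu']; exact ⟨hcd.le, h.le⟩
    obtain ⟨s', hs', hgs'⟩ := intermediate_value_Icc hs.1
      (hg.mono (Set.Icc_subset_Icc hu'x.1 (hs.2.trans hv'x.2))) h0m
    have : s' ∈ B := ⟨⟨hs'.1, (hs'.2.trans hs.2).trans hv'x.2⟩, by simp [hgs']⟩
    have := csInf_le hBbdd this
    linarith [hs'.2, hsv']

omit H in
lemma sub1 {g : ℝ → ℝ} {u v c d : ℝ} (huv : u < v) (hcd : c < d)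
    (hg : ContinuousOn g (Set.Icc u v)) (himg : Set.Icc (0:ℝ) 1 ⊆ g '' Set.Icc u v)
    (hcd1 : Set.Icc c d ⊆ Set.Icc (0:ℝ) 1) :
    ∃ u' v', u' < v' ∧ Set.Icc u' v' ⊆ Set.Icc u v ∧ g '' Set.Icc u' v' ⊆ Set.Icc c d := by
  obtain ⟨x₁, hx₁, hgx₁⟩ := himg (hcd1 (Set.left_mem_Icc.2 hcd.le))
  obtain ⟨x₂, hx₂, hgx₂⟩ := himg (hcd1 (Set.right_mem_Icc.2 hcd.le))
  have hne : x₁ ≠ x₂ := by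
    intro h
    rw [h, hgx₂] at hgx₁
    linarith
  rcases hne.lt_or_gt with hlt | hgt
  · obtain ⟨u', v', h1, h2, h3⟩ :=
      band hlt hcd (hg.mono (Set.Icc_subset_Icc hx₁.1 hx₂.2)) hgx₁ hgx₂
    exact ⟨u', v', h1, h2.trans (Set.Icc_subset_Icc hx₁.1 hx₂.2), h3⟩
  · set g' : ℝ → ℝ := fun s => c + d - g s with hg'def
    have hg'c : ContinuousOn g' (Set.Icc x₂ x₁) :=
      (continuousOn_const.sub (hg.mono (Set.Icc_subset_Icc hx₂.1 hx₁.2)))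
    obtain ⟨u', v', h1, h2, h3⟩ := band hgt hcd hg'c
      (by simp [hg'def, hgx₂]) (by simp only [hg'def, hgx₁]; ring)
    refine ⟨u', v', h1, h2.trans (Set.Icc_subset_Icc hx₂.1 hx₁.2), ?_⟩
    rintro _ ⟨s, hs, rfl⟩
    have := h3 (Set.mem_image_of_mem g' hs)
    simp only [hg'def] at this
    exact ⟨by linarith [this.2], by linarith [this.1]⟩

omit H in
lemma rat_target {z ε : ℝ} (hz : z ∈ Set.Icc (0:ℝ) 1) (hε : 0 < ε) :
    ∃ q1 q2 : ℚ, (q1:ℝ) < (q2:ℝ) ∧ Set.Icc (q1:ℝ) (q2:ℝ) ⊆ Set.Icc (0:ℝ) 1 ∧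
      Set.Icc (q1:ℝ) (q2:ℝ) ⊆ Metric.ball z ε := by
  by_cases h : z < 1
  · set d := min 1 (z + ε/2) with hddef
    have hzd : z < d := lt_min h (by linarith)
    obtain ⟨q1, hq1, hq1'⟩ := exists_rat_btwn hzd
    obtain ⟨q2, hq2, hq2'⟩ := exists_rat_btwn hq1'
    refine ⟨q1, q2, hq2, ?_, ?_⟩
    · intro s hs
      have hd1 : d ≤ 1 := min_le_left _ _
      exact ⟨le_trans (le_trans hz.1 hq1.le) hs.1, by linarith [hs.2]⟩
    · intro s hs
      rw [Metric.mem_ball, Real.dist_eq, abs_sub_lt_iff]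
      have hd2 : d ≤ z + ε/2 := min_le_right _ _
      constructor <;> linarith [hs.1, hs.2]
  · have hz1 : z = 1 := le_antisymm hz.2 (not_lt.1 h)
    set c := max 0 (z - ε/2) with hcdef
    have hcz : c < z := max_lt (by rw [hz1]; linarith) (by linarith)
    obtain ⟨q1, hq1, hq1'⟩ := exists_rat_btwn hcz
    obtain ⟨q2, hq2, hq2'⟩ := exists_rat_btwn hq1'
    refine ⟨q1, q2, hq2, ?_, ?_⟩
    · intro s hs
      have hc0 : (0:ℝ) ≤ c := le_max_left _ _
      exact ⟨le_trans hc0 (le_trans hq1.le hs.1), by rw [← hz1]; linarith [hs.2]⟩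
    · intro s hs
      rw [Metric.mem_ball, Real.dist_eq, abs_sub_lt_iff]
      have hc2 : z - ε/2 ≤ c := le_max_right _ _
      constructor <;> linarith [hs.1, hs.2]

lemma dense_orbit_of_leo
    (hleo : ∀ α β : ℝ, α < β → Set.Icc α β ⊆ Set.Icc 0 1 →
      ∃ n : ℕ, 1 ≤ n ∧ Set.Icc (0:ℝ) 1 ⊆ f^[n] '' Set.Icc α β) :
    ∃ x ∈ Set.Icc (0:ℝ) 1, Set.Icc (0:ℝ) 1 ⊆ closure {y : ℝ | ∃ n : ℕ, f^[n] x = y} := by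
  classical
  obtain ⟨e, he⟩ := exists_surjective_nat (ℚ × ℚ)
  have step : ∀ (i : ℕ) (s : {p : ℝ × ℝ // p.1 < p.2 ∧ Set.Icc p.1 p.2 ⊆ Set.Icc (0:ℝ) 1}),
      ∃ s' : {p : ℝ × ℝ // p.1 < p.2 ∧ Set.Icc p.1 p.2 ⊆ Set.Icc (0:ℝ) 1},
        Set.Icc s'.1.1 s'.1.2 ⊆ Set.Icc s.1.1 s.1.2 ∧
        ((((e i).1 : ℝ) < ((e i).2 : ℝ) ∧
            Set.Icc ((e i).1 : ℝ) ((e i).2 : ℝ) ⊆ Set.Icc (0:ℝ) 1) →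
          ∃ n : ℕ, f^[n] '' Set.Icc s'.1.1 s'.1.2 ⊆ Set.Icc ((e i).1 : ℝ) ((e i).2 : ℝ)) := by
    intro i s
    by_cases hgood : ((e i).1 : ℝ) < ((e i).2 : ℝ) ∧
        Set.Icc ((e i).1 : ℝ) ((e i).2 : ℝ) ⊆ Set.Icc (0:ℝ) 1
    · obtain ⟨n, hn, hcov⟩ := hleo s.1.1 s.1.2 s.2.1 s.2.2
      obtain ⟨u', v', hu'v', hsub', himg'⟩ :=
        sub1 s.2.1 hgood.1 ((H.iter_contOn n).mono s.2.2) hcov hgood.2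
      exact ⟨⟨(u', v'), hu'v', hsub'.trans s.2.2⟩, hsub', fun _ => ⟨n, himg'⟩⟩
    · exact ⟨s, subset_rfl, fun hg => absurd hg hgood⟩
  choose stepF hstep1 hstep2 using step
  set seq : ℕ → {p : ℝ × ℝ // p.1 < p.2 ∧ Set.Icc p.1 p.2 ⊆ Set.Icc (0:ℝ) 1} :=
    fun n => Nat.rec (motive := fun _ => {p : ℝ × ℝ // p.1 < p.2 ∧ Set.Icc p.1 p.2 ⊆ Set.Icc (0:ℝ) 1})
      ⟨(0, 1), zero_lt_one, subset_rfl⟩ (fun i prev => stepF i prev) n with hseqdef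
  have hseqsucc : ∀ i, seq (i+1) = stepF i (seq i) := fun i => rfl
  set t : ℕ → Set ℝ := fun n => Set.Icc (seq n).1.1 (seq n).1.2 with htdef
  have hnest : ∀ n, t (n+1) ⊆ t n := by
    intro n
    have h1 := hstep1 n (seq n)
    rw [htdef]
    simp only [hseqsucc n]
    exact h1
  obtain ⟨x, hx⟩ := IsCompact.nonempty_iInter_of_sequence_nonempty_isCompact_isClosed t hnest
    (fun n => Set.nonempty_Icc.2 (seq n).2.1.le) isCompact_Icc (fun n => isClosed_Icc)
  have hxn : ∀ n, x ∈ t n := fun n => Set.mem_iInter.1 hx n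
  have hxI : x ∈ Set.Icc (0:ℝ) 1 := hxn 0
  refine ⟨x, hxI, ?_⟩
  intro z hz
  rw [Metric.mem_closure_iff]
  intro ε hε
  obtain ⟨q1, q2, hq, hsubI, hball⟩ := rat_target hz hε
  obtain ⟨i, hi⟩ := he (q1, q2)
  have hgood : ((e i).1 : ℝ) < ((e i).2 : ℝ) ∧
      Set.Icc ((e i).1 : ℝ) ((e i).2 : ℝ) ⊆ Set.Icc (0:ℝ) 1 := by
    rw [hi]
    exact ⟨hq, hsubI⟩
  obtain ⟨n, himg⟩ := hstep2 i (seq i) hgood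
  have hxin : x ∈ Set.Icc (stepF i (seq i)).1.1 (stepF i (seq i)).1.2 := by
    have := hxn (i+1)
    rw [htdef] at this
    simpa only [hseqsucc i] using this
  have hfx : f^[n] x ∈ Set.Icc ((e i).1 : ℝ) ((e i).2 : ℝ) :=
    himg (Set.mem_image_of_mem _ hxin)
  rw [hi] at hfx
  refine ⟨f^[n] x, ⟨n, rfl⟩, ?_⟩
  have := hball hfx
  rwa [Metric.mem_ball, dist_comm] at this

end UD

/-- For a continuous unimodal surjection `f : [0,1] → [0,1]` with
`f(0) = 0 = f(1)` and `f(a) = 1`, strictly increasing on `[0,a]` and strictly decreasing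
on `[a,1]`, the following are equivalent: (a) `f` has a dense orbit; (b) the periodic
points of `f` are dense in `[0,1]`; (c) `f` has sensitive dependence on initial
conditions. -/
theorem unimodal_transitive_iff_dense_periodic_iff_sensitive
    (a : ℝ) (ha0 : 0 < a) (ha1 : a < 1) (f : ℝ → ℝ)
    (hf : ContinuousOn f (Set.Icc 0 1))
    (hm : Set.MapsTo f (Set.Icc 0 1) (Set.Icc 0 1))
    (hsurj : Set.SurjOn f (Set.Icc 0 1) (Set.Icc 0 1))
    (h0 : f 0 = 0) (h1 : f 1 = 0) (hfa : f a = 1)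
    (hmono : StrictMonoOn f (Set.Icc 0 a))
    (hanti : StrictAntiOn f (Set.Icc a 1)) :
    ((∃ x ∈ Set.Icc (0:ℝ) 1,
        Set.Icc (0:ℝ) 1 ⊆ closure {y : ℝ | ∃ n : ℕ, f^[n] x = y}) ↔
      Set.Icc (0:ℝ) 1 ⊆ closure {p : ℝ | p ∈ Set.Icc (0:ℝ) 1 ∧ PerPt f p}) ∧
    ((∃ x ∈ Set.Icc (0:ℝ) 1,
        Set.Icc (0:ℝ) 1 ⊆ closure {y : ℝ | ∃ n : ℕ, f^[n] x = y}) ↔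
      ∃ δ > 0, ∀ x ∈ Set.Icc (0:ℝ) 1, ∀ V : Set ℝ, IsOpen V → x ∈ V →
        ∃ y ∈ V ∩ Set.Icc (0:ℝ) 1, ∃ n : ℕ, 0 < n ∧ δ ≤ |f^[n] x - f^[n] y|) := by
  have H : UD a f := ⟨ha0, ha1, hf, hm, h0, h1, hfa, hmono, hanti⟩
  have leoOfDO : (∃ x ∈ Set.Icc (0:ℝ) 1,
        Set.Icc (0:ℝ) 1 ⊆ closure {y : ℝ | ∃ n : ℕ, f^[n] x = y}) →
      (∀ α β : ℝ, α < β → Set.Icc α β ⊆ Set.Icc 0 1 →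
        ∃ n : ℕ, 1 ≤ n ∧ Set.Icc (0:ℝ) 1 ⊆ f^[n] '' Set.Icc α β) := by
    intro hDO
    have hnf : ∀ t ∈ Set.Ioo 0 a, f t ≠ t := by
      intro t ht hfix
      exact H.no_dense_orbit_of_fix ht hfix hDO
    have hgt := H.hgt_of_no_fix hnf
    have hcover : ∀ α β : ℝ, α < β → Set.Icc α β ⊆ Set.Icc 0 1 →
        ∃ (n₀ : ℕ) (y : ℝ), y ∈ Set.Icc α β ∧ f^[n₀] y = a := by
      intro α β hab hsub
      by_contra hno
      push_neg at hno
      exact H.no_dense_orbit_of_avoid hab hsub (fun n y hy => hno n y hy) hgt hDO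
    exact H.leo hgt hcover
  have leoOfDP : (Set.Icc (0:ℝ) 1 ⊆ closure {p : ℝ | p ∈ Set.Icc (0:ℝ) 1 ∧ PerPt f p}) →
      (∀ α β : ℝ, α < β → Set.Icc α β ⊆ Set.Icc 0 1 →
        ∃ n : ℕ, 1 ≤ n ∧ Set.Icc (0:ℝ) 1 ⊆ f^[n] '' Set.Icc α β) := by
    intro hDP
    have hnf : ∀ t ∈ Set.Ioo 0 a, f t ≠ t := by
      intro t ht hfix
      exact H.no_dense_per_of_fix ht hfix hDP
    have hgt := H.hgt_of_no_fix hnf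
    have hcover : ∀ α β : ℝ, α < β → Set.Icc α β ⊆ Set.Icc 0 1 →
        ∃ (n₀ : ℕ) (y : ℝ), y ∈ Set.Icc α β ∧ f^[n₀] y = a := by
      intro α β hab hsub
      by_contra hno
      push_neg at hno
      exact H.no_dense_per_of_avoid hab hsub (fun n y hy => hno n y hy) hDP
    exact H.leo hgt hcover
  have leoOfSens : (∃ δ > 0, ∀ x ∈ Set.Icc (0:ℝ) 1, ∀ V : Set ℝ, IsOpen V → x ∈ V →
        ∃ y ∈ V ∩ Set.Icc (0:ℝ) 1, ∃ n : ℕ, 0 < n ∧ δ ≤ |f^[n] x - f^[n] y|) →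
      (∀ α β : ℝ, α < β → Set.Icc α β ⊆ Set.Icc 0 1 →
        ∃ n : ℕ, 1 ≤ n ∧ Set.Icc (0:ℝ) 1 ⊆ f^[n] '' Set.Icc α β) := by
    rintro ⟨δ, hδ, hsens⟩
    have hnf : ∀ t ∈ Set.Ioo 0 a, f t ≠ t := by
      intro t ht hfix
      exact H.not_sens_of_fix ht hfix hδ hsens
    have hgt := H.hgt_of_no_fix hnf
    have hcover : ∀ α β : ℝ, α < β → Set.Icc α β ⊆ Set.Icc 0 1 →
        ∃ (n₀ : ℕ) (y : ℝ), y ∈ Set.Icc α β ∧ f^[n₀] y = a := by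
      intro α β hab hsub
      by_contra hno
      push_neg at hno
      exact H.not_sens_of_avoid hab hsub (fun n y hy => hno n y hy) hδ hsens
    exact H.leo hgt hcover
  constructor
  · constructor
    · intro hDO
      exact H.dense_per_of_leo (leoOfDO hDO)
    · intro hDP
      exact H.dense_orbit_of_leo (leoOfDP hDP)
  · constructor
    · intro hDO
      exact ⟨1/4, by norm_num, H.sens_of_leo (leoOfDO hDO)⟩
    · intro hSens
      exact H.dense_orbit_of_leo (leoOfSens hSens)
end

section
/- Let 0 < a < 1 and let f be a continuous map from [0,1] onto itself such that f(0) = 0 = f(1), f(a) = 1, f is strictly increasing on [0, a], and f is strictly decreasing on [a, 1]. If f has a dense orbit, then f is topologically conjugate to the tent map T(x) = 1 − |2x − 1| on [0,1]; that is, there exists a homeomorphism h : [0,1] → [0,1] such that h ∘ f = T ∘ h. -/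
open Filter Set Function

/-- The tent map `T(x) = 1 - |2x - 1|`. -/
noncomputable def tentMap : ℝ → ℝ := fun x => 1 - |2 * x - 1|

lemma tent_left {y : ℝ} (h : y ≤ 1/2) : tentMap y = 2*y := by
  unfold tentMap; rw [abs_of_nonpos (by linarith)]; ring
lemma tent_right {y : ℝ} (h : 1/2 ≤ y) : tentMap y = 2 - 2*y := by
  unfold tentMap; rw [abs_of_nonneg (by linarith)]; ring

lemma exists_semiconj (a : ℝ) (ha0 : 0 < a) (ha1 : a < 1) (f : ℝ → ℝ)
    (hf : ContinuousOn f (Set.Icc 0 1))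
    (hm : Set.MapsTo f (Set.Icc 0 1) (Set.Icc 0 1))
    (h0 : f 0 = 0) (h1 : f 1 = 0) (hfa : f a = 1)
    (hmono : StrictMonoOn f (Set.Icc 0 a))
    (hanti : StrictAntiOn f (Set.Icc a 1)) :
    ∃ H : ℝ → ℝ, Continuous H ∧ Monotone H ∧ H 0 = 0 ∧ H 1 = 1 ∧
      (∀ x, H x ∈ Set.Icc (0:ℝ) 1) ∧
      ∀ x ∈ Set.Icc (0:ℝ) 1, H (f x) = tentMap (H x) := by
  have h0I : (0:ℝ) ∈ Icc (0:ℝ) 1 := ⟨le_refl 0, zero_le_one⟩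
  have h1I : (1:ℝ) ∈ Icc (0:ℝ) 1 := ⟨zero_le_one, le_refl 1⟩
  set F : Icc (0:ℝ) 1 → Icc (0:ℝ) 1 := Set.MapsTo.restrict f _ _ hm with hF
  have hFc : Continuous F := hf.mapsToRestrict hm
  have hFval : ∀ x : Icc (0:ℝ) 1, (F x : ℝ) = f x := fun x => rfl
  set X : Set C(Icc (0:ℝ) 1, ℝ) := {g | (∀ x, g x ∈ Icc (0:ℝ) 1) ∧
      (∀ x y : Icc (0:ℝ) 1, (x:ℝ) ≤ (y:ℝ) → g x ≤ g y) ∧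
      g ⟨1, h1I⟩ = 1 ∧ g ⟨0, h0I⟩ = 0} with hX
  have hXc : IsClosed X := by
    have e1 : IsClosed {g : C(Icc (0:ℝ) 1, ℝ) | ∀ x, g x ∈ Icc (0:ℝ) 1} := by
      have : {g : C(Icc (0:ℝ) 1, ℝ) | ∀ x, g x ∈ Icc (0:ℝ) 1}
          = ⋂ x, (fun g : C(Icc (0:ℝ) 1, ℝ) => g x) ⁻¹' Icc 0 1 := by
        ext g; simp
      rw [this]
      exact isClosed_iInter fun x =>
        isClosed_Icc.preimage (continuous_eval_const x)
    have e2 : IsClosed {g : C(Icc (0:ℝ) 1, ℝ) |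
        ∀ x y : Icc (0:ℝ) 1, (x:ℝ) ≤ (y:ℝ) → g x ≤ g y} := by
      have : {g : C(Icc (0:ℝ) 1, ℝ) | ∀ x y : Icc (0:ℝ) 1, (x:ℝ) ≤ (y:ℝ) → g x ≤ g y}
          = ⋂ (x : Icc (0:ℝ) 1), ⋂ (y : Icc (0:ℝ) 1), ⋂ (_ : (x:ℝ) ≤ (y:ℝ)),
            {g : C(Icc (0:ℝ) 1, ℝ) | g x ≤ g y} := by
        ext g; simp only [mem_setOf_eq, mem_iInter]
      rw [this]
      exact isClosed_iInter fun x => isClosed_iInter fun y => isClosed_iInter fun _ =>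
        isClosed_le (continuous_eval_const x) (continuous_eval_const y)
    have e3 : IsClosed {g : C(Icc (0:ℝ) 1, ℝ) | g ⟨1, h1I⟩ = 1} :=
      isClosed_eq (continuous_eval_const _) continuous_const
    have e4 : IsClosed {g : C(Icc (0:ℝ) 1, ℝ) | g ⟨0, h0I⟩ = 0} :=
      isClosed_eq (continuous_eval_const _) continuous_const
    have : X = {g : C(Icc (0:ℝ) 1, ℝ) | ∀ x, g x ∈ Icc (0:ℝ) 1}
        ∩ ({g | ∀ x y : Icc (0:ℝ) 1, (x:ℝ) ≤ (y:ℝ) → g x ≤ g y}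
        ∩ ({g | g ⟨1, h1I⟩ = 1} ∩ {g | g ⟨0, h0I⟩ = 0})) := by
      rfl
    rw [this]
    exact e1.inter (e2.inter (e3.inter e4))
  haveI : Nonempty X :=
    ⟨⟨⟨Subtype.val, continuous_subtype_val⟩, fun x => x.2, fun x y h => h, rfl, rfl⟩⟩
  haveI : CompleteSpace X := hXc.completeSpace_coe
  have hFa : F ⟨a, ⟨ha0.le, ha1.le⟩⟩ = ⟨1, h1I⟩ := Subtype.ext (by rw [hFval]; exact hfa)
  have hF1 : F ⟨1, h1I⟩ = ⟨0, h0I⟩ := Subtype.ext (by rw [hFval]; exact h1)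
  have hF0 : F ⟨0, h0I⟩ = ⟨0, h0I⟩ := Subtype.ext (by rw [hFval]; exact h0)
  -- the operator
  have key : ∀ g : C(Icc (0:ℝ) 1, ℝ), g ∈ X → ∃ g' : C(Icc (0:ℝ) 1, ℝ), g' ∈ X ∧
      ∀ x : Icc (0:ℝ) 1, g' x = if (x:ℝ) ≤ a then g (F x) / 2 else 1 - g (F x) / 2 := by
    intro g hg
    obtain ⟨hg01, hgmono, hg1, hg0⟩ := hg
    have hcont : Continuous fun x : Icc (0:ℝ) 1 =>
        if (x:ℝ) ≤ a then g (F x) / 2 else 1 - g (F x) / 2 := by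
      apply Continuous.if_le
      · exact (g.continuous.comp hFc).div_const 2
      · exact continuous_const.sub ((g.continuous.comp hFc).div_const 2)
      · exact continuous_subtype_val
      · exact continuous_const
      · intro x hxa
        have hx : x = ⟨a, ⟨ha0.le, ha1.le⟩⟩ := Subtype.ext hxa
        rw [hx, hFa, hg1]; norm_num
    refine ⟨⟨_, hcont⟩, ⟨?_, ?_, ?_, ?_⟩, fun x => rfl⟩
    · intro x
      simp only [ContinuousMap.coe_mk]
      split
      · exact ⟨by linarith [(hg01 (F x)).1], by linarith [(hg01 (F x)).2]⟩
      · exact ⟨by linarith [(hg01 (F x)).2], by linarith [(hg01 (F x)).1]⟩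
    · intro x y hxy
      simp only [ContinuousMap.coe_mk]
      by_cases hya : (y:ℝ) ≤ a
      · rw [if_pos (le_trans hxy hya), if_pos hya]
        have hfxy : f x ≤ f y := by
          rcases eq_or_lt_of_le hxy with h | h
          · rw [show (x:ℝ) = (y:ℝ) from h]
          · exact (hmono ⟨x.2.1, le_trans hxy hya⟩ ⟨y.2.1, hya⟩ h).le
        have : g (F x) ≤ g (F y) := hgmono (F x) (F y) (by rw [hFval, hFval]; exact hfxy)
        linarith
      · by_cases hxa : (x:ℝ) ≤ a
        · rw [if_pos hxa, if_neg hya]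
          linarith [(hg01 (F x)).2, (hg01 (F y)).2]
        · rw [if_neg hxa, if_neg hya]
          push_neg at hxa hya
          have hfxy : f y ≤ f x := by
            rcases eq_or_lt_of_le hxy with h | h
            · rw [show (x:ℝ) = (y:ℝ) from h]
            · exact (hanti ⟨hxa.le, x.2.2⟩ ⟨hya.le, y.2.2⟩ h).le
          have : g (F y) ≤ g (F x) := hgmono (F y) (F x) (by rw [hFval, hFval]; exact hfxy)
          linarith
    · simp only [ContinuousMap.coe_mk]
      rw [if_neg (by push_neg; exact ha1), hF1, hg0]; norm_num
    · simp only [ContinuousMap.coe_mk]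
      rw [if_pos ha0.le, hF0, hg0]; norm_num
  choose Phi0 hPhi0X hPhi0eq using key
  set Phi : X → X := fun g => ⟨Phi0 g.1 g.2, hPhi0X g.1 g.2⟩ with hPhi
  have hlip : LipschitzWith (1/2 : NNReal) Phi := by
    apply LipschitzWith.of_dist_le_mul
    intro g g'
    rw [Subtype.dist_eq]
    have hhalf : ((1/2 : NNReal) : ℝ) = 1/2 := by norm_num
    rw [hhalf]
    show dist (Phi0 g.1 g.2) (Phi0 g'.1 g'.2) ≤ 1/2 * dist (g:C(Icc (0:ℝ) 1,ℝ)) (g':C(Icc (0:ℝ) 1,ℝ))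
    apply (ContinuousMap.dist_le (by positivity)).2
    intro x
    rw [hPhi0eq g.1 g.2 x, hPhi0eq g'.1 g'.2 x]
    have hd : |g.1 (F x) - g'.1 (F x)| ≤ dist g.1 g'.1 := by
      rw [← Real.dist_eq]; exact ContinuousMap.dist_apply_le_dist (F x)
    rw [Real.dist_eq]
    split
    · rw [show g.1 (F x)/2 - g'.1 (F x)/2 = (g.1 (F x) - g'.1 (F x))/2 by ring,
        abs_div, abs_two]
      linarith
    · rw [show (1 - g.1 (F x)/2) - (1 - g'.1 (F x)/2) = -((g.1 (F x) - g'.1 (F x))/2) by ring,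
        abs_neg, abs_div, abs_two]
      linarith
  have hcw : ContractingWith (1/2 : NNReal) Phi := ⟨by rw [← NNReal.coe_lt_coe]; norm_num, hlip⟩
  set hstar : X := ContractingWith.fixedPoint Phi hcw with hhstar
  have hfix : Phi hstar = hstar := hcw.fixedPoint_isFixedPt
  obtain ⟨hc01, hcmono, hc1, hc0⟩ := hstar.2
  have heq : ∀ x : Icc (0:ℝ) 1, hstar.1 x
      = if (x:ℝ) ≤ a then hstar.1 (F x) / 2 else 1 - hstar.1 (F x) / 2 := by
    intro x
    have h2 : (Phi hstar).1 x = hstar.1 x := by rw [hfix]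
    rw [← h2]
    exact hPhi0eq hstar.1 hstar.2 x
  have hsc : ∀ x : Icc (0:ℝ) 1, hstar.1 (F x) = tentMap (hstar.1 x) := by
    intro x
    rcases le_or_gt (x:ℝ) a with hxa | hxa
    · have hx := heq x; rw [if_pos hxa] at hx
      have hhalf : hstar.1 x ≤ 1/2 := by rw [hx]; linarith [(hc01 (F x)).2]
      rw [tent_left hhalf, hx]; ring
    · have hx := heq x; rw [if_neg (not_le.2 hxa)] at hx
      have hhalf : 1/2 ≤ hstar.1 x := by rw [hx]; linarith [(hc01 (F x)).2]
      rw [tent_right hhalf, hx]; ring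
  refine ⟨fun t => hstar.1 (projIcc 0 1 zero_le_one t),
    hstar.1.continuous.comp continuous_projIcc, ?_, ?_, ?_, fun x => hc01 _, ?_⟩
  · intro s t hst
    exact hcmono _ _ (Subtype.coe_le_coe.2 (monotone_projIcc zero_le_one hst))
  · show hstar.1 (projIcc 0 1 zero_le_one 0) = 0
    rw [projIcc_of_mem _ h0I]; exact hc0
  · show hstar.1 (projIcc 0 1 zero_le_one 1) = 1
    rw [projIcc_of_mem _ h1I]; exact hc1
  · intro x hx
    show hstar.1 (projIcc 0 1 zero_le_one (f x)) = tentMap (hstar.1 (projIcc 0 1 zero_le_one x))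
    rw [projIcc_of_mem _ (hm hx), projIcc_of_mem _ hx]
    exact hsc ⟨x, hx⟩

/-- A continuous unimodal surjection of `[0,1]` as above which has a
dense orbit is topologically conjugate to the tent map: there is a homeomorphism `h` of
`[0,1]` with `h ∘ f = T ∘ h`. -/
theorem unimodal_with_dense_orbit_conjugate_to_tent
    (a : ℝ) (ha0 : 0 < a) (ha1 : a < 1) (f : ℝ → ℝ)
    (hf : ContinuousOn f (Set.Icc 0 1))
    (hm : Set.MapsTo f (Set.Icc 0 1) (Set.Icc 0 1))
    (hsurj : Set.SurjOn f (Set.Icc 0 1) (Set.Icc 0 1))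
    (h0 : f 0 = 0) (h1 : f 1 = 0) (hfa : f a = 1)
    (hmono : StrictMonoOn f (Set.Icc 0 a))
    (hanti : StrictAntiOn f (Set.Icc a 1))
    (hdense : ∃ x ∈ Set.Icc (0:ℝ) 1,
        Set.Icc (0:ℝ) 1 ⊆ closure {y : ℝ | ∃ n : ℕ, f^[n] x = y}) :
    ∃ h : (Set.Icc (0:ℝ) 1) ≃ₜ (Set.Icc (0:ℝ) 1),
      ∀ x : Set.Icc (0:ℝ) 1,
        (h (Set.MapsTo.restrict f _ _ hm x) : ℝ) = tentMap (h x : ℝ) := by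
  obtain ⟨H, Hc, Hmono, H0, H1, Hmem, Hsemi⟩ :=
    exists_semiconj a ha0 ha1 f hf hm h0 h1 hfa hmono hanti
  obtain ⟨x₀, hx₀I, hdens⟩ := hdense
  set O : Set ℝ := {y | ∃ n : ℕ, f^[n] x₀ = y} with hO
  have horbI : ∀ n : ℕ, f^[n] x₀ ∈ Icc (0:ℝ) 1 := fun n => hm.iterate n hx₀I
  have Hiter : ∀ n : ℕ, ∀ x ∈ Icc (0:ℝ) 1, H (f^[n] x) = tentMap^[n] (H x) := by
    intro n
    induction n with
    | zero => intro x _; rfl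
    | succ n ih =>
      intro x hx
      rw [Function.iterate_succ_apply', Function.iterate_succ_apply',
        Hsemi _ (hm.iterate n hx), ih x hx]
  have hrange : Icc (0:ℝ) 1 ⊆ H '' Icc (0:ℝ) 1 := by
    have := intermediate_value_Icc zero_le_one Hc.continuousOn
    rwa [H0, H1] at this
  -- injectivity of H on [0,1]
  have main : ∀ u v : ℝ, u ∈ Icc (0:ℝ) 1 → v ∈ Icc (0:ℝ) 1 → u < v → H u = H v → False := by
    intro u v hu hv huv hHeq
    set c := H u with hc
    set P : Set ℝ := Icc (0:ℝ) 1 ∩ H ⁻¹' {c} with hP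
    have hPco : IsClosed P := isClosed_Icc.inter (isClosed_singleton.preimage Hc)
    have hPu : u ∈ P := ⟨hu, rfl⟩
    have hPv : v ∈ P := ⟨hv, hHeq.symm⟩
    have hPbb : BddBelow P := BddBelow.mono inter_subset_left bddBelow_Icc
    have hPba : BddAbove P := BddAbove.mono inter_subset_left bddAbove_Icc
    set p := sInf P with hp
    set q := sSup P with hq
    have hpP : p ∈ P := hPco.csInf_mem ⟨u, hPu⟩ hPbb
    have hqP : q ∈ P := hPco.csSup_mem ⟨u, hPu⟩ hPba
    have hpu : p ≤ u := csInf_le hPbb hPu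
    have hvq : v ≤ q := le_csSup hPba hPv
    have hpq : p < q := lt_of_le_of_lt hpu (lt_of_lt_of_le huv hvq)
    have hIccP : Icc p q ⊆ P := by
      rintro t ⟨hpt, htq⟩
      refine ⟨⟨le_trans hpP.1.1 hpt, le_trans htq hqP.1.2⟩, ?_⟩
      have hm1 : H p ≤ H t := Hmono hpt
      have hm2 : H t ≤ H q := Hmono htq
      have hHp : H p = c := hpP.2
      have hHq : H q = c := hqP.2
      simp only [mem_preimage, mem_singleton_iff]
      linarith
    have hIoosub : Ioo p q ⊆
        closure ((fun n : ℕ => f^[n] x₀) '' {n | f^[n] x₀ ∈ Ioo p q}) := by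
      intro t ht
      have htcl : t ∈ closure O :=
        hdens ⟨le_trans hpP.1.1 ht.1.le, le_trans ht.2.le hqP.1.2⟩
      have hsplit : O ⊆ ((fun n : ℕ => f^[n] x₀) '' {n | f^[n] x₀ ∈ Ioo p q})
          ∪ (Icc (0:ℝ) 1 \ Ioo p q) := by
        rintro y ⟨n, rfl⟩
        by_cases hy : f^[n] x₀ ∈ Ioo p q
        · exact Or.inl ⟨n, hy, rfl⟩
        · exact Or.inr ⟨horbI n, hy⟩
      have h2 := closure_mono hsplit htcl
      rw [closure_union] at h2
      rcases h2 with h2 | h2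
      · exact h2
      · exfalso
        have hcl : IsClosed (Icc (0:ℝ) 1 \ Ioo p q) := isClosed_Icc.sdiff isOpen_Ioo
        rw [hcl.closure_eq] at h2
        exact h2.2 ht
    have hvis : {n : ℕ | f^[n] x₀ ∈ Ioo p q}.Infinite := by
      by_contra hfin
      rw [Set.not_infinite] at hfin
      have hfin2 : ((fun n : ℕ => f^[n] x₀) '' {n | f^[n] x₀ ∈ Ioo p q}).Finite :=
        hfin.image _
      have : (Ioo p q).Finite :=
        hfin2.subset (by rwa [hfin2.isClosed.closure_eq] at hIoosub)
      exact Set.Ioo_infinite hpq this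
    obtain ⟨m, hmvis⟩ := hvis.nonempty
    obtain ⟨m', hm'vis, hmm'⟩ := hvis.exists_gt m
    set n := m' - m with hn
    have hnpos : 0 < n := by omega
    set z := f^[m] x₀ with hz
    have hzI : z ∈ Icc (0:ℝ) 1 := horbI m
    have hzP : z ∈ P := hIccP ⟨hmvis.1.le, hmvis.2.le⟩
    have hfnz : f^[n] z ∈ P := by
      have he : f^[n] z = f^[m'] x₀ := by
        rw [hz, ← Function.iterate_add_apply]
        congr 1
        omega
      rw [he]
      exact hIccP ⟨hm'vis.1.le, hm'vis.2.le⟩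
    have hHz : H z = c := hzP.2
    have hTc : tentMap^[n] c = c := by
      have h3 := Hiter n z hzI
      rw [hHz] at h3
      rw [← h3]
      exact hfnz.2
    have hPinv : Set.MapsTo f^[n] P P := by
      intro x hx
      refine ⟨hm.iterate n hx.1, ?_⟩
      simp only [mem_preimage, mem_singleton_iff]
      rw [Hiter n x hx.1, show H x = c from hx.2, hTc]
    set S : Set ℝ := ((fun k : ℕ => tentMap^[k] (H x₀)) '' Iio m)
        ∪ ((fun j : ℕ => tentMap^[j] c) '' Iio n) with hS
    have hSfin : S.Finite := ((Set.finite_Iio m).image _).union ((Set.finite_Iio n).image _)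
    have horbS : O ⊆ H ⁻¹' S := by
      rintro y ⟨k, rfl⟩
      by_cases hk : k < m
      · exact Or.inl ⟨k, hk, (Hiter k x₀ hx₀I).symm⟩
      · push_neg at hk
        obtain ⟨t, rfl⟩ : ∃ t, k = t + m := ⟨k - m, by omega⟩
        have h1' : f^[t + m] x₀ = f^[t % n] ((f^[n])^[t / n] z) := by
          rw [Function.iterate_add_apply, ← hz]
          conv_lhs => rw [show t = t % n + n * (t / n) from (Nat.mod_add_div t n).symm]
          rw [Function.iterate_add_apply, Function.iterate_mul]
        have hw : (f^[n])^[t / n] z ∈ P := hPinv.iterate (t / n) hzP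
        refine Or.inr ⟨t % n, Nat.mod_lt _ hnpos, ?_⟩
        rw [h1', Hiter (t % n) _ hw.1, show H ((f^[n])^[t / n] z) = c from hw.2]
    have hIS : Icc (0:ℝ) 1 ⊆ H ⁻¹' S := by
      have hscl : IsClosed (H ⁻¹' S) := hSfin.isClosed.preimage Hc
      exact hdens.trans (closure_minimal horbS hscl)
    have hsubS : Icc (0:ℝ) 1 ⊆ S := by
      intro t ht
      obtain ⟨x, hx, rfl⟩ := hrange ht
      exact hIS hx
    exact Set.Icc_infinite zero_lt_one (hSfin.subset hsubS)
  have Hinj : Set.InjOn H (Icc (0:ℝ) 1) := by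
    intro u hu v hv huv
    rcases lt_trichotomy u v with h | h | h
    · exact (main u v hu hv h huv).elim
    · exact h
    · exact (main v u hv hu h huv.symm).elim
  set h' : Icc (0:ℝ) 1 → Icc (0:ℝ) 1 := fun x => ⟨H x, Hmem x⟩ with hh'
  have hbij : Function.Bijective h' := by
    constructor
    · intro x y hxy
      exact Subtype.ext (Hinj x.2 y.2 (congrArg Subtype.val hxy))
    · intro y
      obtain ⟨x, hx, hxy⟩ := hrange y.2
      exact ⟨⟨x, hx⟩, Subtype.ext hxy⟩
  have hc' : Continuous h' := Continuous.subtype_mk (Hc.comp continuous_subtype_val) _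
  refine ⟨Continuous.homeoOfEquivCompactToT2 (f := Equiv.ofBijective h' hbij) hc', ?_⟩
  intro x
  exact Hsemi x.1 x.2
end

section
/- The tent map T(x) = 1 − |2x − 1| on [0,1] has an uncountable 1-scrambled set S which is dense in [0,1], invariant under T, and consists entirely of transitive points of T. -/
open Filter Set Function

open Real Topology

/-!
Write points of `[0,1]` in binary. The tent map acts on digit sequences essentially as the
shift: `T x` is the shift of `x` or one minus it, and `T (1 - y) = T y`, so `Tⁿ⁺¹ x` is `T`
applied to the `n`-fold shift of `x`. Hence `Tⁿ⁺¹ x` is within `2 / 2ᴸ` of `T c` whenever the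
digits of `x` from position `n` on agree with those of `c` for `L` places.

To every `α : ℕ → Fin 2` attach the point `x_α` whose digits are concatenated blocks: block `j`
has `j + 1` zeros, then `j / 2` copies of an event digit, then a window holding a finite word.
Where the event digit is `1` for every `α`, each orbit comes near `1` and, a few steps later,
near `0`; where it is `α i`, the orbits of `x_α` and `x_β` are simultaneously near `1` and near
`0` if `α i ≠ β i`, which also shows that `α ↦ x_α` is injective. The zero runs bring any two
orbits near `0` together, and bring an orbit near `0` while a periodic orbit other than `0`
lies in `[1/2, 1]`, which it does once per period. The words run through all finite words, so
every orbit is dense. The iterates of all the `x_α` form the scrambled set.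
-/

lemma tentMap_mapsTo_Icc : MapsTo tentMap (Icc 0 1) (Icc 0 1) := by
  rintro x ⟨h0, h1⟩
  have : |2 * x - 1| ≤ 1 := abs_le.2 ⟨by linarith, by linarith⟩
  simp only [tentMap, mem_Icc]
  exact ⟨by linarith, by linarith [abs_nonneg (2 * x - 1)]⟩

lemma abs_tentMap_sub_le (a b : ℝ) : |tentMap a - tentMap b| ≤ 2 * |a - b| := by
  have h := abs_abs_sub_abs_le_abs_sub (2 * b - 1) (2 * a - 1)
  rw [show 2 * b - 1 - (2 * a - 1) = 2 * (b - a) by ring, abs_mul, abs_two, abs_sub_comm b] at h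
  simpa only [tentMap, sub_sub_sub_cancel_left] using h

lemma tentMap_one_sub (y : ℝ) : tentMap (1 - y) = tentMap y := by
  simp only [tentMap]
  rw [show 2 * (1 - y) - 1 = -(2 * y - 1) by ring, abs_neg]

lemma tentMap_div_two {z : ℝ} (hz : z ≤ 1) : tentMap (z / 2) = z := by
  simp only [tentMap]
  rw [abs_of_nonpos (by linarith)]
  ring

lemma ofDigits_eq_div_two (a : ℕ → Fin 2) :
    ofDigits a = (a 0 + ofDigits fun i => a (i + 1)) / 2 := by
  rw [ofDigits_eq_sum_add_ofDigits a 1]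
  simp [ofDigitsTerm]
  ring

lemma ofDigits_const_one : ofDigits (fun _ => (1 : Fin 2)) = 1 :=
  ofDigits_const_last_eq_one 1

lemma tentMap_tentMap_ofDigits (a : ℕ → Fin 2) :
    tentMap (tentMap (ofDigits a)) = tentMap (ofDigits fun i => a (i + 1)) := by
  have h0 := ofDigits_nonneg fun i => a (i + 1)
  have h1 := ofDigits_le_one fun i => a (i + 1)
  rw [ofDigits_eq_div_two]
  generalize a 0 = d
  fin_cases d
  · simp only [Nat.cast_zero, zero_add, tentMap_div_two h1]
  · rw [← tentMap_one_sub]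
    congr 1
    simp only [tentMap, Nat.cast_one]
    rw [abs_of_nonneg (by linarith)]
    ring

lemma tentMap_iterate_succ_ofDigits (a : ℕ → Fin 2) (n : ℕ) :
    tentMap^[n + 1] (ofDigits a) = tentMap (ofDigits fun i => a (i + n)) := by
  induction n with
  | zero => rfl
  | succ n ih =>
    rw [iterate_succ_apply', ih, tentMap_tentMap_ofDigits]
    simp only [add_assoc, add_comm 1 n]

lemma abs_tentMap_iterate_ofDigits_sub_le {a c : ℕ → Fin 2} {n L : ℕ}
    (h : ∀ i < L, a (n + i) = c i) :
    |tentMap^[n + 1] (ofDigits a) - tentMap (ofDigits c)| ≤ 2 / 2 ^ L := by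
  have hac : |(ofDigits fun i => a (i + n)) - ofDigits c| ≤ (2 ^ L)⁻¹ := by
    have := abs_ofDigits_sub_ofDigits_le fun i hi => (add_comm i n ▸ h i hi :)
    simpa using this
  rw [tentMap_iterate_succ_ofDigits, div_eq_mul_inv]
  exact (abs_tentMap_sub_le _ _).trans (by gcongr)

lemma tentMap_iterate_ofDigits_le_of_const {a : ℕ → Fin 2} {n L : ℕ} {v : Fin 2}
    (h : ∀ i < L, a (n + i) = v) : tentMap^[n + 1] (ofDigits a) ≤ 2 / 2 ^ L := by
  have hv : tentMap (ofDigits fun _ => v) = 0 := by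
    fin_cases v
    · simp [ofDigits, ofDigitsTerm, tentMap]
    · norm_num [ofDigits_const_one, tentMap]
  have := abs_tentMap_iterate_ofDigits_sub_le (c := fun _ => v) h
  rw [hv, sub_zero] at this
  exact (le_abs_self _).trans this

lemma one_sub_le_tentMap_iterate_ofDigits {a : ℕ → Fin 2} {n L : ℕ} (h0 : a n = 0)
    (h1 : ∀ i < L, a (n + 1 + i) = 1) : 1 - 1 / 2 ^ L ≤ tentMap^[n + 1] (ofDigits a) := by
  set c : ℕ → Fin 2 := fun i => if i = 0 then 0 else 1
  have hc : tentMap (ofDigits c) = 1 := by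
    rw [ofDigits_eq_div_two]
    simpa [c, ofDigits_const_one] using tentMap_div_two le_rfl
  have := abs_tentMap_iterate_ofDigits_sub_le (c := c) (L := L + 1) fun i hi => by
    rcases i with _ | i
    · exact h0
    · simpa [c, ← add_assoc, add_right_comm n i 1] using h1 i (by omega)
  rw [hc, pow_succ, div_mul_cancel_right₀ two_ne_zero] at this
  rw [one_div]
  linarith [neg_abs_le (tentMap^[n + 1] (ofDigits a) - 1)]

lemma eventually_div_two_pow_lt (C : ℝ) {ε : ℝ} (hε : 0 < ε) :
    ∀ᶠ N : ℕ in atTop, C / 2 ^ N < ε := by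
  have h : Tendsto (fun N : ℕ => C * (1 / 2) ^ N) atTop (𝓝 0) := by
    simpa using (tendsto_pow_atTop_nhds_zero_of_lt_one (r := (1 / 2 : ℝ))
      (by norm_num) (by norm_num)).const_mul C
  filter_upwards [h.eventually (gt_mem_nhds hε)] with N hN
  simpa [div_eq_mul_inv] using hN

lemma frequently_sub_le_of_forall_exists {u : ℕ → ℝ} {c C ε : ℝ} (hε : 0 < ε)
    (h : ∀ N, ∃ n ≥ N, c - C / 2 ^ N ≤ u n) : ∃ᶠ n in atTop, c - ε ≤ u n := by
  obtain ⟨N₀, hN₀⟩ := eventually_atTop.1 (eventually_div_two_pow_lt C hε)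
  refine frequently_atTop.2 fun M => ?_
  obtain ⟨n, hn, hu⟩ := h (max M N₀)
  exact ⟨n, le_of_max_le_left hn, by linarith [hN₀ (max M N₀) (le_max_right M N₀)]⟩

lemma le_limsup_of_forall_exists {u : ℕ → ℝ} {B c C : ℝ} (hB : ∀ n, u n ≤ B)
    (h : ∀ N, ∃ n ≥ N, c - C / 2 ^ N ≤ u n) : c ≤ limsup u atTop :=
  le_of_forall_sub_le fun _ hε =>
    le_limsup_of_frequently_le (frequently_sub_le_of_forall_exists hε h)
      (isBoundedUnder_of ⟨B, hB⟩)

lemma liminf_eq_zero_of_forall_exists {u : ℕ → ℝ} {B C : ℝ} (h0 : ∀ n, 0 ≤ u n)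
    (hB : ∀ n, u n ≤ B) (h : ∀ N, ∃ n ≥ N, u n ≤ C / 2 ^ N) : liminf u atTop = 0 := by
  refine le_antisymm (le_of_forall_pos_le_add fun ε hε => ?_)
    (le_liminf_of_le (isBoundedUnder_of ⟨B, hB⟩).isCoboundedUnder_ge (.of_forall h0))
  have hneg : ∀ N, ∃ n ≥ N, 0 - C / 2 ^ N ≤ -u n := fun N =>
    (h N).imp fun _ ⟨hn, hu⟩ => ⟨hn, by linarith⟩
  refine liminf_le_of_frequently_le ?_ (isBoundedUnder_of ⟨0, h0⟩)
  exact (frequently_sub_le_of_forall_exists hε hneg).mono fun _ hn => by linarith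

def eventDigit (α : ℕ → Fin 2) : ℕ → Fin 2
  | 0 => 1
  | i + 1 => α i

def blockWord (a : ℕ) : List (Fin 2) := (Encodable.decode a).getD []

/-- Block `j` occupies the positions `j * j, …, j * j + 2 * j`. Its label `(Nat.unpair j).1`
chooses both the event digit and the word, and every label recurs in arbitrarily long blocks. -/
def blockDigit (α : ℕ → Fin 2) (j t : ℕ) : Fin 2 :=
  if t ≤ j then 0
  else if t ≤ j + j / 2 then eventDigit α (Nat.unpair j).1
  else (blockWord (Nat.unpair j).1).getD (t - (j + j / 2 + 1)) 0

def scrambledDigits (α : ℕ → Fin 2) (i : ℕ) : Fin 2 :=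
  blockDigit α (Nat.sqrt i) (i - Nat.sqrt i * Nat.sqrt i)

noncomputable def scrambledPoint (α : ℕ → Fin 2) : ℝ := ofDigits (scrambledDigits α)

section ScrambledDigits

variable (α : ℕ → Fin 2) {j p : ℕ}

lemma scrambledDigits_eq_blockDigit (h₁ : j * j ≤ p) (h₂ : p ≤ j * j + 2 * j) :
    scrambledDigits α p = blockDigit α j (p - j * j) := by
  obtain ⟨t, rfl⟩ := Nat.exists_eq_add_of_le h₁
  rw [scrambledDigits, Nat.sqrt_add_eq j (by omega)]

lemma scrambledDigits_eq_zero (h₁ : j * j ≤ p) (h₂ : p ≤ j * j + j) :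
    scrambledDigits α p = 0 := by
  rw [scrambledDigits_eq_blockDigit α h₁ (by omega), blockDigit, if_pos (by omega)]

lemma scrambledDigits_eq_eventDigit (h₁ : j * j + j < p) (h₂ : p ≤ j * j + j + j / 2) :
    scrambledDigits α p = eventDigit α (Nat.unpair j).1 := by
  rw [scrambledDigits_eq_blockDigit α (j := j) (by omega) (by omega), blockDigit,
    if_neg (by omega), if_pos (by omega)]

lemma scrambledDigits_eq_zero_of_eventDigit (h : eventDigit α (Nat.unpair j).1 = 0)
    (h₁ : j * j ≤ p) (h₂ : p ≤ j * j + j + j / 2) : scrambledDigits α p = 0 := by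
  rcases le_or_gt p (j * j + j) with hp | hp
  · exact scrambledDigits_eq_zero α h₁ hp
  · rw [scrambledDigits_eq_eventDigit α hp h₂, h]

lemma scrambledDigits_eq_blockWord (h : p < j - j / 2) :
    scrambledDigits α (j * j + j + j / 2 + 1 + p) = (blockWord (Nat.unpair j).1).getD p 0 := by
  rw [scrambledDigits_eq_blockDigit α (j := j) (by omega) (by omega), blockDigit,
    if_neg (by omega), if_neg (by omega)]
  congr 1
  omega

end ScrambledDigits

lemma limsupD_comm (f : ℝ → ℝ) (x y : ℝ) : limsupD f x y = limsupD f y x := by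
  simp only [limsupD, abs_sub_comm]

section ScrambledPoint

variable {α β : ℕ → Fin 2} {k l : ℕ}

lemma scrambledPoint_iterate_mem_Icc (α : ℕ → Fin 2) (n : ℕ) :
    tentMap^[n] (scrambledPoint α) ∈ Icc 0 1 :=
  tentMap_mapsTo_Icc.iterate n ⟨ofDigits_nonneg _, ofDigits_le_one _⟩

lemma abs_sub_tentMap_iterate_scrambledPoint_le_one (α : ℕ → Fin 2) {y : ℝ} (hy : y ∈ Icc 0 1)
    (n : ℕ) : |tentMap^[n] (scrambledPoint α) - y| ≤ 1 := by
  have hx := scrambledPoint_iterate_mem_Icc α n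
  exact abs_sub_le_of_nonneg_of_le hx.1 hx.2 hy.1 hy.2

lemma tentMap_iterate_scrambledPoint_le {p L : ℕ} {v : Fin 2}
    (h : ∀ i < L, scrambledDigits α (p + i) = v) :
    tentMap^[p + 1] (scrambledPoint α) ≤ 2 / 2 ^ L :=
  tentMap_iterate_ofDigits_le_of_const h

lemma one_sub_le_tentMap_iterate_scrambledPoint {j : ℕ}
    (h : eventDigit α (Nat.unpair j).1 = 1) :
    1 - 1 / 2 ^ (j / 2) ≤ tentMap^[j * j + j + 1] (scrambledPoint α) :=
  one_sub_le_tentMap_iterate_ofDigits (scrambledDigits_eq_zero α (Nat.le_add_right _ _) le_rfl)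
    fun _ _ => (scrambledDigits_eq_eventDigit α (by omega) (by omega)).trans h

lemma one_le_limsupD_of_forall_exists (α : ℕ → Fin 2) (k : ℕ) {y : ℝ}
    (hy : ∀ n, tentMap^[n] y ∈ Icc 0 1)
    (h : ∀ N, ∃ j, N + k ≤ j / 2 ∧ eventDigit α (Nat.unpair j).1 = 1 ∧
      tentMap^[j * j + j + 1 - k] y ≤ 2 / 2 ^ N) :
    1 ≤ limsupD tentMap (tentMap^[k] (scrambledPoint α)) y := by
  simp only [limsupD, ← iterate_add_apply]
  refine le_limsup_of_forall_exists (C := 3)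
    (fun n => abs_sub_tentMap_iterate_scrambledPoint_le_one α (hy n) _) fun N => ?_
  obtain ⟨j, hj, hev, hyj⟩ := h N
  have hjj := Nat.le_mul_self j
  refine ⟨j * j + j + 1 - k, by omega, ?_⟩
  have hx := one_sub_le_tentMap_iterate_scrambledPoint hev
  have hpow : (1 : ℝ) / 2 ^ (j / 2) ≤ 1 / 2 ^ N := by gcongr <;> [norm_num; omega]
  rw [show j * j + j + 1 - k + k = j * j + j + 1 by omega]
  have h3 : (3 : ℝ) / 2 ^ N = 1 / 2 ^ N + 2 / 2 ^ N := by ring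
  linarith [le_abs_self (tentMap^[j * j + j + 1] (scrambledPoint α) -
    tentMap^[j * j + j + 1 - k] y)]

lemma one_le_limsupD_iterate_of_lt (α : ℕ → Fin 2) (hkl : k < l) :
    1 ≤ limsupD tentMap (tentMap^[k] (scrambledPoint α)) (tentMap^[l] (scrambledPoint α)) := by
  refine one_le_limsupD_of_forall_exists α k (fun n => ?_) fun N => ?_
  · rw [← iterate_add_apply]
    exact scrambledPoint_iterate_mem_Icc α _
  set j := Nat.pair 0 (2 * (N + l + 1))
  have hj : 2 * (N + l + 1) ≤ j := Nat.right_le_pair _ _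
  have hev : eventDigit α (Nat.unpair j).1 = 1 := by simp [j, eventDigit]
  refine ⟨j, by omega, hev, ?_⟩
  rw [← iterate_add_apply, show j * j + j + 1 - k + l = j * j + j + (l - k) + 1 by omega]
  exact tentMap_iterate_scrambledPoint_le fun _ _ =>
    (scrambledDigits_eq_eventDigit α (by omega) (by omega)).trans hev

lemma one_le_limsupD_iterate_of_eq_one_of_eq_zero {i : ℕ} (hα : α i = 1) (hβ : β i = 0) :
    1 ≤ limsupD tentMap (tentMap^[k] (scrambledPoint α)) (tentMap^[l] (scrambledPoint β)) := by
  refine one_le_limsupD_of_forall_exists α k (fun n => ?_) fun N => ?_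
  · rw [← iterate_add_apply]
    exact scrambledPoint_iterate_mem_Icc β _
  set j := Nat.pair (i + 1) (2 * (N + k + l + 1))
  have hj : 2 * (N + k + l + 1) ≤ j := Nat.right_le_pair _ _
  have hjj := Nat.le_mul_self j
  refine ⟨j, by omega, by simp [j, eventDigit, hα], ?_⟩
  rw [← iterate_add_apply, show j * j + j + 1 - k + l = j * j + j + l - k + 1 by omega]
  exact tentMap_iterate_scrambledPoint_le fun _ _ =>
    scrambledDigits_eq_zero_of_eventDigit β (j := j) (by simp [j, eventDigit, hβ]) (by omega)
      (by omega)

lemma one_le_limsupD_iterate_of_apply_ne {i : ℕ} (h : α i ≠ β i) :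
    1 ≤ limsupD tentMap (tentMap^[k] (scrambledPoint α)) (tentMap^[l] (scrambledPoint β)) := by
  obtain ⟨hα, hβ⟩ | ⟨hα, hβ⟩ : α i = 1 ∧ β i = 0 ∨ α i = 0 ∧ β i = 1 := by omega
  · exact one_le_limsupD_iterate_of_eq_one_of_eq_zero hα hβ
  · exact limsupD_comm .. ▸ one_le_limsupD_iterate_of_eq_one_of_eq_zero hβ hα

lemma one_le_limsupD_iterate_of_ne
    (h : tentMap^[k] (scrambledPoint α) ≠ tentMap^[l] (scrambledPoint β)) :
    1 ≤ limsupD tentMap (tentMap^[k] (scrambledPoint α)) (tentMap^[l] (scrambledPoint β)) := by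
  by_cases hαβ : α = β
  · subst hαβ
    rcases lt_trichotomy k l with hkl | rfl | hkl
    · exact one_le_limsupD_iterate_of_lt α hkl
    · exact absurd rfl h
    · exact limsupD_comm .. ▸ one_le_limsupD_iterate_of_lt α hkl
  · obtain ⟨i, hi⟩ := ne_iff.1 hαβ
    exact one_le_limsupD_iterate_of_apply_ne hi

lemma scrambledPoint_injective : Injective scrambledPoint := by
  intro α β h
  by_contra hαβ
  obtain ⟨i, hi⟩ := ne_iff.1 hαβ
  have := one_le_limsupD_iterate_of_apply_ne (k := 0) (l := 0) hi
  norm_num [limsupD, h] at this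

lemma liminfD_iterate_eq_zero (α β : ℕ → Fin 2) (k l : ℕ) :
    liminfD tentMap (tentMap^[k] (scrambledPoint α)) (tentMap^[l] (scrambledPoint β)) = 0 := by
  simp only [liminfD, ← iterate_add_apply]
  refine liminf_eq_zero_of_forall_exists (C := 2) (fun n => abs_nonneg _)
    (fun n => abs_sub_tentMap_iterate_scrambledPoint_le_one α
      (scrambledPoint_iterate_mem_Icc β _) _) fun N => ?_
  set j := N + k + l
  have hjj := Nat.le_mul_self j
  refine ⟨j * j + 1, by omega, ?_⟩
  have hx := tentMap_iterate_scrambledPoint_le (α := α) (p := j * j + k) (L := N) fun _ _ =>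
    scrambledDigits_eq_zero α (j := j) (by omega) (by omega)
  have hy := tentMap_iterate_scrambledPoint_le (α := β) (p := j * j + l) (L := N) fun _ _ =>
    scrambledDigits_eq_zero β (j := j) (by omega) (by omega)
  rw [add_right_comm _ 1 k, add_right_comm _ 1 l]
  exact abs_sub_le_of_nonneg_of_le (scrambledPoint_iterate_mem_Icc α _).1 hx
    (scrambledPoint_iterate_mem_Icc β _).1 hy

end ScrambledPoint

lemma tentMap_of_le_half {y : ℝ} (hy : y ≤ 1 / 2) : tentMap y = 2 * y := by
  simp only [tentMap]
  rw [abs_of_nonpos (by linarith)]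
  ring

/-- Below `1/2` the tent map doubles, so an orbit avoiding `[1/2, 1]` for a whole period
would satisfy `p = 2ᵐ p`. -/
lemma exists_lt_half_le_tentMap_iterate {p : ℝ} {m : ℕ} (hp : p ∈ Icc 0 1) (hp0 : p ≠ 0)
    (hm : 0 < m) (hper : IsPeriodicPt tentMap m p) : ∃ r < m, 1 / 2 ≤ tentMap^[r] p := by
  by_contra! h
  have hdouble : ∀ r ≤ m, tentMap^[r] p = 2 ^ r * p := by
    intro r hr
    induction r with
    | zero => simp
    | succ r ih =>
      rw [iterate_succ_apply', tentMap_of_le_half (h r (by omega)).le, ih (by omega), pow_succ]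
      ring
  have h2m : (1 : ℝ) < 2 ^ m := one_lt_pow₀ one_lt_two hm.ne'
  have hpos : 0 < p := lt_of_le_of_ne hp.1 hp0.symm
  nlinarith [hdouble m le_rfl, hper.eq]

lemma exists_mem_Ico_half_le_tentMap_iterate {p : ℝ} {m : ℕ} (hp : p ∈ Icc 0 1) (hp0 : p ≠ 0)
    (hm : 0 < m) (hper : IsPeriodicPt tentMap m p) (a : ℕ) :
    ∃ n ∈ Ico a (a + 2 * m), 1 / 2 ≤ tentMap^[n] p := by
  obtain ⟨r, hr, hrp⟩ := exists_lt_half_le_tentMap_iterate hp hp0 hm hper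
  have := Nat.div_add_mod a m
  have := Nat.mod_lt a hm
  refine ⟨r + m * (a / m + 1), by constructor <;> rw [mul_add_one] <;> omega, ?_⟩
  rwa [iterate_add_apply, (hper.mul_const _).eq]

lemma half_le_limsupD_iterate_of_perPt (α : ℕ → Fin 2) (k : ℕ) {p : ℝ} (hp : p ∈ Icc 0 1)
    (hper : PerPt tentMap p) : 1 / 2 ≤ limsupD tentMap (tentMap^[k] (scrambledPoint α)) p := by
  obtain ⟨m, hm, hmp⟩ := hper
  rcases eq_or_ne p 0 with rfl | hp0
  · have hfix : ∀ n, tentMap^[n] 0 = 0 := iterate_fixed (by simp [tentMap])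
    refine le_trans (by norm_num) (one_le_limsupD_of_forall_exists α k (fun n => ?_) fun N => ?_)
    · simp [hfix]
    · set j := Nat.pair 0 (2 * (N + k))
      have hj : 2 * (N + k) ≤ j := Nat.right_le_pair _ _
      exact ⟨j, by omega, by simp [j, eventDigit], by simp [hfix]; positivity⟩
  simp only [limsupD, ← iterate_add_apply]
  refine le_limsup_of_forall_exists (C := 2)
    (fun n => abs_sub_tentMap_iterate_scrambledPoint_le_one α
      (tentMap_mapsTo_Icc.iterate n hp) _)
    fun N => ?_
  set j := N + k + 2 * m
  have hjj := Nat.le_mul_self j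
  obtain ⟨n, ⟨hn₁, hn₂⟩, hn⟩ := exists_mem_Ico_half_le_tentMap_iterate hp hp0 hm hmp (j * j + 1)
  refine ⟨n, by omega, ?_⟩
  have hx := tentMap_iterate_scrambledPoint_le (α := α) (p := n + k - 1) (L := N) fun _ _ =>
    scrambledDigits_eq_zero α (j := j) (by omega) (by omega)
  rw [show n + k - 1 + 1 = n + k by omega] at hx
  linarith [neg_abs_le (tentMap^[n + k] (scrambledPoint α) - tentMap^[n] p)]

lemma Icc_subset_closure_orbit_scrambledPoint (α : ℕ → Fin 2) (k : ℕ) :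
    Icc 0 1 ⊆ closure {y | ∃ n, tentMap^[n] (tentMap^[k] (scrambledPoint α)) = y} := by
  intro z hz
  rw [Metric.mem_closure_iff]
  intro ε hε
  obtain ⟨d, -, hd⟩ := ofDigits_SurjOn one_lt_two
    (show z / 2 ∈ Icc (0 : ℝ) 1 from ⟨by linarith [hz.1], by linarith [hz.2]⟩)
  obtain ⟨L, hL⟩ := (eventually_div_two_pow_lt 2 hε).exists
  set w := List.ofFn fun t : Fin L => d t
  set j := Nat.pair (Encodable.encode w) (2 * (L + k + 1))
  have hj : 2 * (L + k + 1) ≤ j := Nat.right_le_pair _ _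
  have hw : blockWord (Nat.unpair j).1 = w := by simp [j, blockWord, Encodable.encodek]
  have hx := abs_tentMap_iterate_ofDigits_sub_le (a := scrambledDigits α) (c := d) (L := L)
    (n := j * j + j + j / 2 + 1) fun i hi => by
      rw [scrambledDigits_eq_blockWord α (by omega), hw]
      simp [w, hi]
  rw [hd, tentMap_div_two hz.2] at hx
  refine ⟨_, ⟨j * j + j + j / 2 + 2 - k, rfl⟩, ?_⟩
  have hjj := Nat.le_mul_self j
  rw [Real.dist_eq, ← iterate_add_apply, show j * j + j + j / 2 + 2 - k + k =
    j * j + j + j / 2 + 1 + 1 by omega, abs_sub_comm]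
  exact hx.trans_lt hL

instance : Uncountable (ℕ → Fin 2) := by
  rw [← not_countable_iff, ← Cardinal.mk_le_aleph0_iff, not_le]
  simpa using Cardinal.aleph0_lt_continuum

/-- The tent map on `[0,1]` has a dense uncountable invariant
`1`-scrambled set consisting of transitive points. -/
theorem tent_map_has_dense_invariant_scrambled_set :
    ∃ S : Set ℝ, ¬ S.Countable ∧ ScrambledSet tentMap (Set.Icc 0 1) 1 S ∧
      Set.Icc (0:ℝ) 1 ⊆ closure S ∧ Set.MapsTo tentMap S S ∧
      ∀ x ∈ S, Set.Icc (0:ℝ) 1 ⊆ closure {y : ℝ | ∃ n : ℕ, tentMap^[n] x = y} := by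
  set S := {x | ∃ α k, tentMap^[k] (scrambledPoint α) = x}
  refine ⟨S, fun hS => ?_, ⟨?_, ?_, ?_⟩, ?_, ?_, ?_⟩
  · have hmaps : MapsTo scrambledPoint univ S := fun α _ => ⟨α, 0, rfl⟩
    exact not_countable_univ (hmaps.countable_of_injOn scrambledPoint_injective.injOn hS)
  · rintro _ ⟨α, k, rfl⟩
    exact scrambledPoint_iterate_mem_Icc α k
  · rintro _ ⟨α, k, rfl⟩ _ ⟨β, l, rfl⟩ hne
    exact ⟨one_le_limsupD_iterate_of_ne hne, liminfD_iterate_eq_zero α β k l⟩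
  · rintro _ ⟨α, k, rfl⟩ p hp hper
    exact half_le_limsupD_iterate_of_perPt α k hp hper
  · refine (Icc_subset_closure_orbit_scrambledPoint 0 0).trans (closure_mono ?_)
    rintro _ ⟨n, rfl⟩
    exact ⟨0, n, rfl⟩
  · rintro _ ⟨α, k, rfl⟩
    exact ⟨α, k + 1, iterate_succ_apply' ..⟩
  · rintro _ ⟨α, k, rfl⟩
    exact Icc_subset_closure_orbit_scrambledPoint α k
end
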